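/- Let G be a connected simple graph of order n with diam(G) = 2 and β(G) = n − 3, with twin graph G*, and let v be a vertex of G such that Γ_2^*(v^*) ≠ ∅ and Γ_1(v) is homogeneous. If |R_1^*(v^*)| = 1, then G* satisfies one of the structures G_2, G_3 or G_7. Structure G_2: G* ≅ P_3 and either (a) the degree-2 vertex is of type (N), one leaf is of type (K) and the other leaf is of any type, or (b) one leaf is of type (K), the other leaf is of type (KN), and the degree-2 vertex is of any type. Structure G_3: G* is the paw (a triangle with a pendant edge), the degree-3 vertex is of any type, one degree-2 vertex is of type (N), the other degree-2 vertex is of type (1K), and the leaf is of type (1N); moreover, if a degree-2 vertex is of type (K), then neither the leaf nor the degree-3 vertex is of type (N). Structure G_7: G* is the kite (K_4 minus an edge) with a pendant edge attached to a degree-3 vertex; the leaf is of type (1), the degree-4 and degree-3 vertices are of type (1K), one degree-2 vertex is of type (K) and the other degree-2 vertex is of type (1). -/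

import Mathlib

namespace PaperMetricDim

open SimpleGraph

variable {V : Type*}

/-- A set `W` of vertices resolves the graph `G`: any two distinct vertices have
different distance to some vertex of `W`. -/
def Resolves (G : SimpleGraph V) (W : Set V) : Prop :=
  ∀ u v : V, u ≠ v → ∃ w ∈ W, G.dist u w ≠ G.dist v w

/-- The metric dimension of `G`: the minimum cardinality of a resolving set. -/
noncomputable def metricDim (G : SimpleGraph V) : ℕ :=
  sInf {k : ℕ | ∃ W : Set V, Resolves G W ∧ W.ncard = k}

/-- `G` is connected and has diameter exactly `d`. -/
def diamEq (G : SimpleGraph V) (d : ℕ) : Prop :=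
  G.Connected ∧ (∀ u v : V, G.dist u v ≤ d) ∧ ∃ u v : V, G.dist u v = d

/-- A set of vertices is homogeneous if it induces a complete or an empty subgraph. -/
def Homogeneous (G : SimpleGraph V) (S : Set V) : Prop :=
  (∀ a ∈ S, ∀ b ∈ S, a ≠ b → G.Adj a b) ∨ (∀ a ∈ S, ∀ b ∈ S, ¬ G.Adj a b)

/-- Two distinct vertices are twins: they have the same neighbours apart from
each other. -/
def Twins (G : SimpleGraph V) (u v : V) : Prop :=
  u ≠ v ∧ G.neighborSet u \ {v} = G.neighborSet v \ {u}

/-- The twin equivalence relation: equal or twins. -/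
def twinRel (G : SimpleGraph V) (u v : V) : Prop := u = v ∨ Twins G u v

/-- The twin class of a vertex. -/
def twinClass (G : SimpleGraph V) (v : V) : Set V := {u : V | twinRel G v u}

/-- The vertices of the twin graph: twin equivalence classes. -/
def TwinVertex (G : SimpleGraph V) : Type _ := {S : Set V // ∃ v : V, S = twinClass G v}

/-- The twin graph `G*` of `G`: twin classes, two distinct classes being
adjacent iff (some, equivalently all) representatives are adjacent in `G`. -/
def twinGraph (G : SimpleGraph V) : SimpleGraph (TwinVertex G) where
  Adj A B := A ≠ B ∧ ∃ a ∈ A.1, ∃ b ∈ B.1, G.Adj a b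
  symm := by
    constructor
    rintro A B ⟨hne, a, ha, b, hb, hab⟩
    exact ⟨hne.symm, b, hb, a, ha, hab.symm⟩
  loopless := by constructor; rintro A ⟨hne, -⟩; exact hne rfl

/-- The twin class of `v`, as a vertex of the twin graph. -/
def cls (G : SimpleGraph V) (v : V) : TwinVertex G := ⟨twinClass G v, v, rfl⟩

/-- A twin-graph vertex of type (1): a singleton class. -/
def typeOne (G : SimpleGraph V) (A : TwinVertex G) : Prop := ∃ v : V, A.1 = {v}

/-- A twin-graph vertex of type (K): a class with at least two vertices inducing
a complete subgraph. -/
def typeK (G : SimpleGraph V) (A : TwinVertex G) : Prop :=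
  A.1.Nontrivial ∧ ∀ a ∈ A.1, ∀ b ∈ A.1, a ≠ b → G.Adj a b

/-- A twin-graph vertex of type (N): a class with at least two vertices inducing
an empty subgraph. -/
def typeN (G : SimpleGraph V) (A : TwinVertex G) : Prop :=
  A.1.Nontrivial ∧ ∀ a ∈ A.1, ∀ b ∈ A.1, ¬ G.Adj a b

/-- Type (1K): type (1) or type (K). -/
def type1K (G : SimpleGraph V) (A : TwinVertex G) : Prop := typeOne G A ∨ typeK G A

/-- Type (1N): type (1) or type (N). -/
def type1N (G : SimpleGraph V) (A : TwinVertex G) : Prop := typeOne G A ∨ typeN G A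

/-- Type (KN): type (K) or type (N). -/
def typeKN (G : SimpleGraph V) (A : TwinVertex G) : Prop := typeK G A ∨ typeN G A

/-- `Γ_i(v)`: the set of vertices at distance `i` from `v`. -/
def Gamma (G : SimpleGraph V) (i : ℕ) (v : V) : Set V := {u : V | G.dist u v = i}

/-- `Γ_i^*(v^*)`: the set of twin-graph vertices at distance `i` from `v^*`. -/
def GammaStar (G : SimpleGraph V) (i : ℕ) (v : V) : Set (TwinVertex G) :=
  {A : TwinVertex G | (twinGraph G).dist A (cls G v) = i}

/-- `R_1(v)`: neighbours of `v` having a neighbour at distance 2 from `v`. -/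
def R1 (G : SimpleGraph V) (v : V) : Set V :=
  {x ∈ Gamma G 1 v | ∃ y ∈ Gamma G 2 v, G.Adj x y}

/-- `R_2(v) = Γ_1(v) \ R_1(v)`. -/
def R2 (G : SimpleGraph V) (v : V) : Set V := Gamma G 1 v \ R1 G v

/-- `R_1^*(v^*)`: twin-graph neighbours of `v^*` having a neighbour in `Γ_2^*(v^*)`. -/
def R1Star (G : SimpleGraph V) (v : V) : Set (TwinVertex G) :=
  {A ∈ GammaStar G 1 v | ∃ B ∈ GammaStar G 2 v, (twinGraph G).Adj A B}

/-- `R_2^*(v^*) = Γ_1^*(v^*) \ R_1^*(v^*)`. -/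
def R2Star (G : SimpleGraph V) (v : V) : Set (TwinVertex G) :=
  GammaStar G 1 v \ R1Star G v

/-- `M_1(x) = Γ_1(v) ∩ Γ_1(x)` (for `x ∈ Γ_1(v)`). -/
def M1 (G : SimpleGraph V) (v x : V) : Set V := Gamma G 1 v ∩ Gamma G 1 x

/-- `M_2(x) = Γ_1(v) ∩ Γ_2(x)` (for `x ∈ Γ_1(v)`). -/
def M2 (G : SimpleGraph V) (v x : V) : Set V := Gamma G 1 v ∩ Gamma G 2 x

/-- Structure `G_1`: the twin graph is `K_3` and has at most one vertex of type (1K). -/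
def structG1 (G : SimpleGraph V) : Prop :=
  ∃ a b c : TwinVertex G, a ≠ b ∧ a ≠ c ∧ b ≠ c ∧
    (∀ X : TwinVertex G, X = a ∨ X = b ∨ X = c) ∧
    (twinGraph G).Adj a b ∧ (twinGraph G).Adj a c ∧ (twinGraph G).Adj b c ∧
    (∀ X Y : TwinVertex G, type1K G X → type1K G Y → X = Y)

/-- Structure `G_2`: the twin graph is the path `P_3` with (a) centre of type (N)
and some leaf of type (K), or (b) one leaf of type (K) and the other of type (KN). -/
def structG2 (G : SimpleGraph V) : Prop :=
  ∃ a b c : TwinVertex G, a ≠ b ∧ a ≠ c ∧ b ≠ c ∧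
    (∀ X : TwinVertex G, X = a ∨ X = b ∨ X = c) ∧
    (twinGraph G).Adj a b ∧ (twinGraph G).Adj b c ∧ ¬ (twinGraph G).Adj a c ∧
    ((typeN G b ∧ (typeK G a ∨ typeK G c)) ∨
     (typeK G a ∧ typeKN G c) ∨ (typeK G c ∧ typeKN G a))

/-- Structure `G_3`: the twin graph is the paw, the triangle being `u, p, q` with
the pendant vertex `l` attached to `u`; `p` is of type (N), `q` of type (1K),
`l` of type (1N); and if `q` is of type (K) then neither `l` nor `u` is of type (N). -/
def structG3 (G : SimpleGraph V) : Prop :=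
  ∃ u p q l : TwinVertex G,
    u ≠ p ∧ u ≠ q ∧ u ≠ l ∧ p ≠ q ∧ p ≠ l ∧ q ≠ l ∧
    (∀ X : TwinVertex G, X = u ∨ X = p ∨ X = q ∨ X = l) ∧
    (twinGraph G).Adj u p ∧ (twinGraph G).Adj u q ∧ (twinGraph G).Adj p q ∧
    (twinGraph G).Adj u l ∧ ¬ (twinGraph G).Adj p l ∧ ¬ (twinGraph G).Adj q l ∧
    typeN G p ∧ type1K G q ∧ type1N G l ∧
    (typeK G q → ¬ typeN G l ∧ ¬ typeN G u)

/-- Structure `G_4`: the twin graph is the cycle `C_5` and every vertex is of type (1). -/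
def structG4 (G : SimpleGraph V) : Prop :=
  ∃ v0 v1 v2 v3 v4 : TwinVertex G,
    v0 ≠ v1 ∧ v0 ≠ v2 ∧ v0 ≠ v3 ∧ v0 ≠ v4 ∧ v1 ≠ v2 ∧ v1 ≠ v3 ∧ v1 ≠ v4 ∧
    v2 ≠ v3 ∧ v2 ≠ v4 ∧ v3 ≠ v4 ∧
    (∀ X : TwinVertex G, X = v0 ∨ X = v1 ∨ X = v2 ∨ X = v3 ∨ X = v4) ∧
    (twinGraph G).Adj v0 v1 ∧ (twinGraph G).Adj v1 v2 ∧ (twinGraph G).Adj v2 v3 ∧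
    (twinGraph G).Adj v3 v4 ∧ (twinGraph G).Adj v4 v0 ∧
    ¬ (twinGraph G).Adj v0 v2 ∧ ¬ (twinGraph G).Adj v1 v3 ∧ ¬ (twinGraph G).Adj v2 v4 ∧
    ¬ (twinGraph G).Adj v3 v0 ∧ ¬ (twinGraph G).Adj v4 v1 ∧
    (∀ X : TwinVertex G, typeOne G X)

/-- Structure `G_5`: the twin graph is `C_5` with one chord (cycle `v0 v1 v2 v3 v4`,
chord `v0 v2`); the two adjacent degree-2 vertices `v3, v4` are of type (1), the
other vertices of type (1K). -/
def structG5 (G : SimpleGraph V) : Prop :=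
  ∃ v0 v1 v2 v3 v4 : TwinVertex G,
    v0 ≠ v1 ∧ v0 ≠ v2 ∧ v0 ≠ v3 ∧ v0 ≠ v4 ∧ v1 ≠ v2 ∧ v1 ≠ v3 ∧ v1 ≠ v4 ∧
    v2 ≠ v3 ∧ v2 ≠ v4 ∧ v3 ≠ v4 ∧
    (∀ X : TwinVertex G, X = v0 ∨ X = v1 ∨ X = v2 ∨ X = v3 ∨ X = v4) ∧
    (twinGraph G).Adj v0 v1 ∧ (twinGraph G).Adj v1 v2 ∧ (twinGraph G).Adj v2 v3 ∧
    (twinGraph G).Adj v3 v4 ∧ (twinGraph G).Adj v4 v0 ∧ (twinGraph G).Adj v0 v2 ∧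
    ¬ (twinGraph G).Adj v1 v3 ∧ ¬ (twinGraph G).Adj v1 v4 ∧ ¬ (twinGraph G).Adj v2 v4 ∧
    typeOne G v3 ∧ typeOne G v4 ∧ type1K G v0 ∧ type1K G v1 ∧ type1K G v2

/-- Structure `G_6`: the twin graph is `C_5` with two adjacent chords (cycle
`v0 v1 v2 v3 v4`, chords `v0 v2` and `v0 v3`, so `v0` has degree 4); `v0` is of any
type, the other vertices of type (1K); no two non-adjacent vertices are both of
type (K), and no two adjacent vertices have the different types (K) and (N). -/
def structG6 (G : SimpleGraph V) : Prop :=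
  ∃ v0 v1 v2 v3 v4 : TwinVertex G,
    v0 ≠ v1 ∧ v0 ≠ v2 ∧ v0 ≠ v3 ∧ v0 ≠ v4 ∧ v1 ≠ v2 ∧ v1 ≠ v3 ∧ v1 ≠ v4 ∧
    v2 ≠ v3 ∧ v2 ≠ v4 ∧ v3 ≠ v4 ∧
    (∀ X : TwinVertex G, X = v0 ∨ X = v1 ∨ X = v2 ∨ X = v3 ∨ X = v4) ∧
    (twinGraph G).Adj v0 v1 ∧ (twinGraph G).Adj v1 v2 ∧ (twinGraph G).Adj v2 v3 ∧
    (twinGraph G).Adj v3 v4 ∧ (twinGraph G).Adj v4 v0 ∧ (twinGraph G).Adj v0 v2 ∧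
    (twinGraph G).Adj v0 v3 ∧
    ¬ (twinGraph G).Adj v1 v3 ∧ ¬ (twinGraph G).Adj v1 v4 ∧ ¬ (twinGraph G).Adj v2 v4 ∧
    type1K G v1 ∧ type1K G v2 ∧ type1K G v3 ∧ type1K G v4 ∧
    (∀ X Y : TwinVertex G, X ≠ Y → ¬ (twinGraph G).Adj X Y →
      ¬ (typeK G X ∧ typeK G Y)) ∧
    (∀ X Y : TwinVertex G, (twinGraph G).Adj X Y → ¬ (typeK G X ∧ typeN G Y))

/-- Structure `G_7`: the twin graph is the kite (`K_4` minus an edge, vertices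
`a, b` of degree 3 in the kite and `c, d` the non-adjacent pair) with a pendant
vertex `l` attached to the degree-3 vertex `a`; `l` is of type (1), `a` and `b`
are of type (1K), one of `c, d` is of type (K) and the other of type (1). -/
def structG7 (G : SimpleGraph V) : Prop :=
  ∃ a b c d l : TwinVertex G,
    a ≠ b ∧ a ≠ c ∧ a ≠ d ∧ a ≠ l ∧ b ≠ c ∧ b ≠ d ∧ b ≠ l ∧ c ≠ d ∧ c ≠ l ∧ d ≠ l ∧
    (∀ X : TwinVertex G, X = a ∨ X = b ∨ X = c ∨ X = d ∨ X = l) ∧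
    (twinGraph G).Adj a b ∧ (twinGraph G).Adj a c ∧ (twinGraph G).Adj a d ∧
    (twinGraph G).Adj b c ∧ (twinGraph G).Adj b d ∧ (twinGraph G).Adj a l ∧
    ¬ (twinGraph G).Adj c d ∧ ¬ (twinGraph G).Adj b l ∧ ¬ (twinGraph G).Adj c l ∧
    ¬ (twinGraph G).Adj d l ∧
    typeOne G l ∧ type1K G a ∧ type1K G b ∧ typeK G c ∧ typeOne G d

/-- Structure `G_8`: the twin graph is the kite (`K_4` minus an edge, `a, b` of
degree 3 and `c, d` the non-adjacent degree-2 pair); one degree-2 vertex `c` is of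
type (K) and the other `d` of type (1); one degree-3 vertex `a` is of type (N)
and the other `b` of type (1K). -/
def structG8 (G : SimpleGraph V) : Prop :=
  ∃ a b c d : TwinVertex G,
    a ≠ b ∧ a ≠ c ∧ a ≠ d ∧ b ≠ c ∧ b ≠ d ∧ c ≠ d ∧
    (∀ X : TwinVertex G, X = a ∨ X = b ∨ X = c ∨ X = d) ∧
    (twinGraph G).Adj a b ∧ (twinGraph G).Adj a c ∧ (twinGraph G).Adj a d ∧
    (twinGraph G).Adj b c ∧ (twinGraph G).Adj b d ∧ ¬ (twinGraph G).Adj c d ∧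
    typeN G a ∧ type1K G b ∧ typeK G c ∧ typeOne G d

/-- Structure `G_9`: the twin graph is `C_4`, two adjacent vertices of type (K)
and the other two of type (1). -/
def structG9 (G : SimpleGraph V) : Prop :=
  ∃ v0 v1 v2 v3 : TwinVertex G,
    v0 ≠ v1 ∧ v0 ≠ v2 ∧ v0 ≠ v3 ∧ v1 ≠ v2 ∧ v1 ≠ v3 ∧ v2 ≠ v3 ∧
    (∀ X : TwinVertex G, X = v0 ∨ X = v1 ∨ X = v2 ∨ X = v3) ∧
    (twinGraph G).Adj v0 v1 ∧ (twinGraph G).Adj v1 v2 ∧ (twinGraph G).Adj v2 v3 ∧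
    (twinGraph G).Adj v3 v0 ∧ ¬ (twinGraph G).Adj v0 v2 ∧ ¬ (twinGraph G).Adj v1 v3 ∧
    typeK G v0 ∧ typeK G v1 ∧ typeOne G v2 ∧ typeOne G v3

/-- Structure `G_10`: the twin graph is the wheel `C_4 ∨ K_1` (hub `h`, rim
`v0 v1 v2 v3`); two adjacent rim (degree-3) vertices `v0, v1` are of type (K), the
hub is of type (1K), and the other vertices of type (1). -/
def structG10 (G : SimpleGraph V) : Prop :=
  ∃ h v0 v1 v2 v3 : TwinVertex G,
    h ≠ v0 ∧ h ≠ v1 ∧ h ≠ v2 ∧ h ≠ v3 ∧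
    v0 ≠ v1 ∧ v0 ≠ v2 ∧ v0 ≠ v3 ∧ v1 ≠ v2 ∧ v1 ≠ v3 ∧ v2 ≠ v3 ∧
    (∀ X : TwinVertex G, X = h ∨ X = v0 ∨ X = v1 ∨ X = v2 ∨ X = v3) ∧
    (twinGraph G).Adj h v0 ∧ (twinGraph G).Adj h v1 ∧ (twinGraph G).Adj h v2 ∧
    (twinGraph G).Adj h v3 ∧
    (twinGraph G).Adj v0 v1 ∧ (twinGraph G).Adj v1 v2 ∧ (twinGraph G).Adj v2 v3 ∧
    (twinGraph G).Adj v3 v0 ∧ ¬ (twinGraph G).Adj v0 v2 ∧ ¬ (twinGraph G).Adj v1 v3 ∧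
    typeK G v0 ∧ typeK G v1 ∧ type1K G h ∧ typeOne G v2 ∧ typeOne G v3

/-!
In diameter two a vertex `z ∉ {a, b}` resolves `a, b` iff it is adjacent to exactly one of them,
so `V ∖ M` resolves `G` iff every pair of `M` is told apart by adjacency to a vertex outside `M`.
Choosing one representative per twin class turns this into a condition on sets `𝓜` of classes
of `G*`: two classes of `𝓜` are told apart by another class adjacent to exactly one of them,
which must have a second member if it lies in `𝓜`, or by a second member of one of the two
classes, which is decided by the types (K)/(N). Thus `β(G) = n - 3` says that some three classes
are pairwise separated in this sense and no four are.

Let `X` be the class of `R_1^*(v^*)`. Every class at distance two from `v^*` is adjacent to `X`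
(a common neighbor with `v^*` lies in `R_1^*(v^*)`). If `v^*` has a second neighbor class `S`,
homogeneity of `Γ_1(v)` forces a clique, `v^*` is of type (N), and `G*` is the paw on `X, v^*, S`
and the single far class (`G_3`). Otherwise `G*` is `v^*`, `X` and the far classes: one far
class gives `G_2`, two give `G_3`, three must induce a path and give `G_7`, and four are
impossible. Each excluded type is ruled out by exhibiting four pairwise separated classes,
except for `G_2`, where the three classes of `G*` must themselves be pairwise separated.
-/

section Twins

variable {G : SimpleGraph V} {a b c t z : V}

theorem Twins.symm (h : Twins G a b) : Twins G b a := ⟨h.1.symm, h.2.symm⟩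

theorem Twins.adj_iff (h : Twins G a b) (ha : z ≠ a) (hb : z ≠ b) :
    G.Adj a z ↔ G.Adj b z := by
  have := congrArg (z ∈ ·) h.2
  simpa [ha, hb] using this

theorem Twins.trans (hab : Twins G a b) (hbc : Twins G b c) (hac : a ≠ c) : Twins G a c := by
  have key : ∀ z, z ≠ a → z ≠ c → (G.Adj a z ↔ G.Adj c z) := by
    intro z hza hzc
    by_cases hzb : z = b
    · subst hzb
      have h1 := hab.adj_iff hac.symm hbc.1.symm
      have h2 := hbc.adj_iff hab.1 hac
      rw [G.adj_comm z a, G.adj_comm c z] at *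
      tauto
    · exact (hab.adj_iff hza hzb).trans (hbc.adj_iff hzb hzc)
  refine ⟨hac, Set.ext fun z => ?_⟩
  simp only [Set.mem_sdiff, mem_neighborSet, Set.mem_singleton_iff]
  by_cases hza : z = a
  · subst hza; simp
  by_cases hzc : z = c
  · subst hzc; simp
  simp [hza, hzc, key z hza hzc]

theorem twinRel.refl (G : SimpleGraph V) (a : V) : twinRel G a a := Or.inl rfl

theorem twinRel.symm (h : twinRel G a b) : twinRel G b a :=
  h.imp Eq.symm Twins.symm

theorem twinRel.trans (hab : twinRel G a b) (hbc : twinRel G b c) : twinRel G a c := by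
  rcases hab with rfl | hab
  · exact hbc
  rcases hbc with rfl | hbc
  · exact .inr hab
  by_cases hac : a = c
  · exact .inl hac
  · exact .inr (hab.trans hbc hac)

theorem twinRel.adj_iff (h : twinRel G a b) (ha : z ≠ a) (hb : z ≠ b) :
    G.Adj a z ↔ G.Adj b z := by
  rcases h with rfl | h
  · rfl
  · exact h.adj_iff ha hb

theorem twinRel.adj_of_adj (hbc : twinRel G b c) (hab : G.Adj a b) (hca : c ≠ a) :
    G.Adj a c := by
  rcases hbc with rfl | hbc
  · exact hab
  · exact ((hbc.adj_iff hab.ne hca.symm).1 hab.symm).symm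

theorem exists_adj_ne_adj_of_not_twinRel (h : ¬ twinRel G a b) :
    ∃ z, z ≠ a ∧ z ≠ b ∧ ¬ (G.Adj z a ↔ G.Adj z b) := by
  by_contra! hz
  refine h (.inr ⟨fun hab => h (.inl hab), Set.ext fun z => ?_⟩)
  simp only [Set.mem_sdiff, mem_neighborSet, Set.mem_singleton_iff]
  by_cases hza : z = a
  · subst hza; simp
  by_cases hzb : z = b
  · subst hzb; simp
  simp [hza, hzb, G.adj_comm a z, G.adj_comm b z, hz z hza hzb]

end Twins

section Classes

variable {G : SimpleGraph V} {a b a' b' t : V} {A B : TwinVertex G}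

theorem mem_cls_self (G : SimpleGraph V) (a : V) : a ∈ (cls G a).1 := twinRel.refl G a

theorem TwinVertex.eq_cls_of_mem (ha : a ∈ A.1) : A = cls G a := by
  obtain ⟨S, w, rfl⟩ := A
  exact Subtype.ext <| Set.ext fun b =>
    ⟨fun hb => twinRel.trans (twinRel.symm ha) hb, fun hb => twinRel.trans ha hb⟩

theorem TwinVertex.exists_mem (A : TwinVertex G) : ∃ a, a ∈ A.1 := by
  obtain ⟨S, w, rfl⟩ := A
  exact ⟨w, twinRel.refl G w⟩

theorem cls_surjective : Function.Surjective (cls G) := fun A =>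
  let ⟨a, ha⟩ := A.exists_mem
  ⟨a, (TwinVertex.eq_cls_of_mem ha).symm⟩

theorem cls_eq_cls_iff : cls G a = cls G b ↔ twinRel G a b :=
  ⟨fun h => twinRel.symm (h ▸ mem_cls_self G a : a ∈ (cls G b).1),
    fun h => TwinVertex.eq_cls_of_mem h⟩

theorem TwinVertex.twinRel_of_mem (ha : a ∈ A.1) (hb : b ∈ A.1) : twinRel G a b :=
  cls_eq_cls_iff.1 ((TwinVertex.eq_cls_of_mem ha).symm.trans (TwinVertex.eq_cls_of_mem hb))

theorem TwinVertex.ne_of_mem (ha : a ∈ A.1) (hb : b ∈ B.1) (hAB : A ≠ B) : a ≠ b := by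
  rintro rfl
  exact hAB ((TwinVertex.eq_cls_of_mem ha).trans (TwinVertex.eq_cls_of_mem hb).symm)

theorem adj_iff_adj_of_mem (ha : a ∈ A.1) (ha' : a' ∈ A.1) (hb : b ∈ B.1) (hb' : b' ∈ B.1)
    (hAB : A ≠ B) : G.Adj a b ↔ G.Adj a' b' := by
  rw [(TwinVertex.twinRel_of_mem ha ha').adj_iff (TwinVertex.ne_of_mem hb ha hAB.symm)
      (TwinVertex.ne_of_mem hb ha' hAB.symm), G.adj_comm a' b, G.adj_comm a' b',
    (TwinVertex.twinRel_of_mem hb hb').adj_iff (TwinVertex.ne_of_mem ha' hb hAB)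
      (TwinVertex.ne_of_mem ha' hb' hAB)]

theorem twinGraph_adj_iff (ha : a ∈ A.1) (hb : b ∈ B.1) :
    (twinGraph G).Adj A B ↔ A ≠ B ∧ G.Adj a b :=
  ⟨fun ⟨hAB, _, ha', _, hb', h⟩ => ⟨hAB, (adj_iff_adj_of_mem ha' ha hb' hb hAB).1 h⟩,
    fun ⟨hAB, h⟩ => ⟨hAB, a, ha, b, hb, h⟩⟩

theorem cls_adj_cls_iff :
    (twinGraph G).Adj (cls G a) (cls G b) ↔ ¬ twinRel G a b ∧ G.Adj a b := by
  rw [twinGraph_adj_iff (mem_cls_self G a) (mem_cls_self G b), Ne, cls_eq_cls_iff]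

theorem adj_iff_typeK (ha : a ∈ A.1) (ht : t ∈ A.1) (hat : a ≠ t) :
    G.Adj a t ↔ typeK G A := by
  refine ⟨fun h => ⟨⟨a, ha, t, ht, hat⟩, fun p hp q hq hpq => ?_⟩,
    fun h => h.2 a ha t ht hat⟩
  have spread : ∀ c ∈ A.1, c ≠ a → G.Adj a c := fun c hc hca =>
    (TwinVertex.twinRel_of_mem ht hc).adj_of_adj h hca
  by_cases hpa : p = a
  · exact hpa ▸ spread q hq (hpa ▸ hpq).symm
  by_cases hqa : q = a
  · exact hqa ▸ (spread p hp hpa).symm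
  exact (TwinVertex.twinRel_of_mem ha hq).adj_of_adj (spread p hp hpa).symm hpq.symm

theorem not_adj_iff_typeN (ha : a ∈ A.1) (ht : t ∈ A.1) (hat : a ≠ t) :
    ¬ G.Adj a t ↔ typeN G A := by
  refine ⟨fun h => ⟨⟨a, ha, t, ht, hat⟩, fun p hp q hq hpq => h ?_⟩,
    fun h => h.2 a ha t ht⟩
  exact (adj_iff_typeK ha ht hat).2 ((adj_iff_typeK hp hq hpq.ne).1 hpq)

theorem typeK_or_typeN (h : A.1.Nontrivial) : typeK G A ∨ typeN G A := by
  obtain ⟨a, ha, t, ht, hat⟩ := h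
  exact (em (G.Adj a t)).imp (adj_iff_typeK ha ht hat).1 (not_adj_iff_typeN ha ht hat).1

theorem typeK.not_typeN (hK : typeK G A) : ¬ typeN G A := fun hN =>
  let ⟨a, ha, t, ht, hat⟩ := hK.1
  hN.2 a ha t ht (hK.2 a ha t ht hat)

theorem typeOne_iff_not_nontrivial : typeOne G A ↔ ¬ A.1.Nontrivial := by
  rw [Set.not_nontrivial_iff]
  obtain ⟨a, ha⟩ := A.exists_mem
  exact ⟨fun ⟨w, hw⟩ => hw ▸ Set.subsingleton_singleton,
    fun h => ⟨a, h.eq_singleton_of_mem ha⟩⟩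

theorem type1K_iff_not_typeN : type1K G A ↔ ¬ typeN G A := by
  rw [type1K, typeOne_iff_not_nontrivial]
  exact ⟨fun h hN => h.elim (· hN.1) (·.not_typeN hN),
    fun h => (em A.1.Nontrivial).symm.imp id fun hA => (typeK_or_typeN hA).resolve_right h⟩

theorem type1N_iff_not_typeK : type1N G A ↔ ¬ typeK G A := by
  rw [type1N, typeOne_iff_not_nontrivial]
  exact ⟨fun h hK => h.elim (· hK.1) hK.not_typeN,
    fun h => (em A.1.Nontrivial).symm.imp id fun hA => (typeK_or_typeN hA).resolve_left h⟩

theorem typeKN_iff_nontrivial : typeKN G A ↔ A.1.Nontrivial :=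
  ⟨fun h => h.elim (·.1) (·.1), typeK_or_typeN⟩

end Classes

section ClassSeparation

variable {G : SimpleGraph V} {a b t z : V} {A B C : TwinVertex G} {𝓜 : Set (TwinVertex G)}

/-- A second member of the class `A` tells the members of `A` apart from those of `B`. -/
def TwinsSeparate (G : SimpleGraph V) (A B : TwinVertex G) : Prop :=
  (typeK G A ∧ ¬ (twinGraph G).Adj A B) ∨ (typeN G A ∧ (twinGraph G).Adj A B)

/-- With one representative fixed in each class of `𝓜`, some vertex other than these
representatives is adjacent to exactly one of the representatives of `A` and `B`. -/
def ClassPairSeparated (G : SimpleGraph V) (𝓜 : Set (TwinVertex G)) (A B : TwinVertex G) :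
    Prop :=
  (∃ C, C ≠ A ∧ C ≠ B ∧ (C ∈ 𝓜 → C.1.Nontrivial) ∧
    ¬ ((twinGraph G).Adj C A ↔ (twinGraph G).Adj C B)) ∨
  TwinsSeparate G A B ∨ TwinsSeparate G B A

def ClassSeparated (G : SimpleGraph V) (𝓜 : Set (TwinVertex G)) : Prop :=
  ∀ A ∈ 𝓜, ∀ B ∈ 𝓜, A ≠ B → ClassPairSeparated G 𝓜 A B

theorem twinsSeparate_iff (ha : a ∈ A.1) (ht : t ∈ A.1) (hta : t ≠ a) (hb : b ∈ B.1)
    (hAB : A ≠ B) : ¬ (G.Adj t a ↔ G.Adj t b) ↔ TwinsSeparate G A B := by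
  rw [adj_iff_typeK ht ha hta, ← adj_iff_adj_of_mem ha ht hb hb hAB, TwinsSeparate,
    twinGraph_adj_iff ha hb, and_iff_right hAB]
  have hKN := typeK_or_typeN (A := A) ⟨t, ht, a, ha, hta⟩
  have hKN' := fun h : typeK G A => h.not_typeN
  tauto

theorem ClassPairSeparated.symm (h : ClassPairSeparated G 𝓜 A B) :
    ClassPairSeparated G 𝓜 B A := by
  obtain ⟨C, hCA, hCB, hC, hsep⟩ | h | h := h
  · exact .inl ⟨C, hCB, hCA, hC, fun h => hsep h.symm⟩
  · exact .inr (.inr h)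
  · exact .inr (.inl h)

theorem ClassPairSeparated.of_notMem (hC : C ∉ 𝓜) (hA : A ∈ 𝓜) (hB : B ∈ 𝓜)
    (hCA : (twinGraph G).Adj C A) (hCB : ¬ (twinGraph G).Adj C B) :
    ClassPairSeparated G 𝓜 A B :=
  .inl ⟨C, fun h => hC (h ▸ hA), fun h => hC (h ▸ hB), fun h => absurd h hC,
    fun h => hCB (h.1 hCA)⟩

theorem ClassPairSeparated.of_nontrivial (hC : C.1.Nontrivial) (hne : C ≠ B)
    (hCA : (twinGraph G).Adj C A) (hCB : ¬ (twinGraph G).Adj C B) :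
    ClassPairSeparated G 𝓜 A B :=
  .inl ⟨C, hCA.ne, hne, fun _ => hC, fun h => hCB (h.1 hCA)⟩

theorem ClassPairSeparated.of_twinsSeparate_left (h : TwinsSeparate G A B) :
    ClassPairSeparated G 𝓜 A B :=
  .inr (.inl h)

theorem ClassPairSeparated.of_twinsSeparate_right (h : TwinsSeparate G B A) :
    ClassPairSeparated G 𝓜 A B :=
  .inr (.inr h)

theorem classPairSeparated_image_cls {M : Set V} (ha : a ∈ M) (hb : b ∈ M)
    (hab : ¬ twinRel G a b) (hz : z ∉ M) (h : ¬ (G.Adj z a ↔ G.Adj z b)) :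
    ClassPairSeparated G (cls G '' M) (cls G a) (cls G b) := by
  have hAB : cls G a ≠ cls G b := fun h => hab (cls_eq_cls_iff.1 h)
  have hza : z ≠ a := fun h => hz (h ▸ ha)
  have hzb : z ≠ b := fun h => hz (h ▸ hb)
  by_cases hz_a : twinRel G a z
  · exact .of_twinsSeparate_left <|
      (twinsSeparate_iff (mem_cls_self G a) hz_a hza (mem_cls_self G b) hAB).1 h
  by_cases hz_b : twinRel G b z
  · exact .of_twinsSeparate_right <|
      (twinsSeparate_iff (mem_cls_self G b) hz_b hzb (mem_cls_self G a) hAB.symm).1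
        fun h' => h h'.symm
  have hCa : cls G z ≠ cls G a := fun h => hz_a (cls_eq_cls_iff.1 h.symm)
  have hCb : cls G z ≠ cls G b := fun h => hz_b (cls_eq_cls_iff.1 h.symm)
  refine .inl ⟨cls G z, hCa, hCb, ?_, ?_⟩
  · rintro ⟨m, hm, hmz⟩
    exact ⟨m, hmz ▸ mem_cls_self G m, z, mem_cls_self G z, fun h => hz (h ▸ hm)⟩
  · rwa [cls_adj_cls_iff, cls_adj_cls_iff, ← cls_eq_cls_iff, ← cls_eq_cls_iff,
      and_iff_right hCa, and_iff_right hCb]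

theorem exists_adj_ne_adj_of_classPairSeparated {M : Set V}
    (hM : ∀ m ∈ M, ∀ m' ∈ M, twinRel G m m' → m = m') (ha : a ∈ M) (hb : b ∈ M)
    (hab : a ≠ b) (h : ClassPairSeparated G (cls G '' M) (cls G a) (cls G b)) :
    ∃ z ∉ M, ¬ (G.Adj z a ↔ G.Adj z b) := by
  have hAB : cls G a ≠ cls G b := fun h => hab (hM a ha b hb (cls_eq_cls_iff.1 h))
  have fresh : ∀ m ∈ M, ∀ t ∈ (cls G m).1, t ≠ m → t ∉ M := fun m hm t ht htm htM =>
    htm (hM m hm t htM ht).symm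
  obtain ⟨C, hCa, hCb, hCM, hsep⟩ | h | h := h
  · have key : ∀ z ∈ C.1, z ∉ M → ∃ z ∉ M, ¬ (G.Adj z a ↔ G.Adj z b) :=
      fun z hz hzM => ⟨z, hzM, by rwa [twinGraph_adj_iff hz (mem_cls_self G a),
        twinGraph_adj_iff hz (mem_cls_self G b), and_iff_right hCa, and_iff_right hCb] at hsep⟩
    by_cases hC : C ∈ cls G '' M
    · obtain ⟨m, hm, rfl⟩ := hC
      obtain ⟨t, ht, htm⟩ := (hCM ⟨m, hm, rfl⟩).exists_ne m
      exact key t ht (fresh m hm t ht htm)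
    · obtain ⟨z, hz⟩ := C.exists_mem
      exact key z hz fun hzM => hC ⟨z, hzM, (TwinVertex.eq_cls_of_mem hz).symm⟩
  · obtain ⟨t, ht, hta⟩ := (h.elim (·.1.1) (·.1.1)).exists_ne a
    exact ⟨t, fresh a ha t ht hta,
      (twinsSeparate_iff (mem_cls_self G a) ht hta (mem_cls_self G b) hAB).2 h⟩
  · obtain ⟨t, ht, htb⟩ := (h.elim (·.1.1) (·.1.1)).exists_ne b
    exact ⟨t, fresh b hb t ht htb, fun h' => (twinsSeparate_iff (mem_cls_self G b) ht htb
      (mem_cls_self G a) hAB.symm).2 h h'.symm⟩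

theorem classPairSeparated_pair (hAB : A ≠ B) : ClassPairSeparated G {A, B} A B := by
  obtain ⟨a, ha⟩ := A.exists_mem
  obtain ⟨b, hb⟩ := B.exists_mem
  rw [TwinVertex.eq_cls_of_mem ha, TwinVertex.eq_cls_of_mem hb] at hAB ⊢
  have hab : ¬ twinRel G a b := fun h => hAB (cls_eq_cls_iff.2 h)
  obtain ⟨z, hza, hzb, h⟩ := exists_adj_ne_adj_of_not_twinRel hab
  simpa [Set.image_pair] using classPairSeparated_image_cls (M := {a, b}) (by simp) (by simp)
    hab (by simp [hza, hzb]) h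

theorem twinsSeparate_of_forall_adj_iff (hAB : A ≠ B)
    (h : ∀ C, C ≠ A → C ≠ B → ((twinGraph G).Adj C A ↔ (twinGraph G).Adj C B)) :
    TwinsSeparate G A B ∨ TwinsSeparate G B A :=
  (classPairSeparated_pair hAB).resolve_left fun ⟨C, hCA, hCB, _, hC⟩ => hC (h C hCA hCB)

theorem typeK_or_typeK_of_twinsSeparate (hAB : ¬ (twinGraph G).Adj A B)
    (h : TwinsSeparate G A B ∨ TwinsSeparate G B A) : typeK G A ∨ typeK G B := by
  rcases h with (⟨hK, -⟩ | ⟨-, h⟩) | (⟨hK, -⟩ | ⟨-, h⟩)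
  exacts [.inl hK, absurd h hAB, .inr hK, absurd h.symm hAB]

theorem typeN_or_typeN_of_twinsSeparate (hAB : (twinGraph G).Adj A B)
    (h : TwinsSeparate G A B ∨ TwinsSeparate G B A) : typeN G A ∨ typeN G B := by
  rcases h with (⟨-, h⟩ | ⟨hN, -⟩) | (⟨-, h⟩ | ⟨hN, -⟩)
  exacts [absurd hAB h, .inl hN, absurd hAB.symm h, .inr hN]

theorem ClassPairSeparated.nontrivial_or_typeN {D : TwinVertex G}
    (h : ClassPairSeparated G 𝓜 A B) (hAB : (twinGraph G).Adj A B) (hD : D ∈ 𝓜)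
    (hother : ∀ C, C ≠ A → C ≠ B → C = D) :
    D.1.Nontrivial ∨ typeN G A ∨ typeN G B := by
  obtain ⟨C, hCA, hCB, hC, -⟩ | (⟨-, hn⟩ | ⟨hN, -⟩) | (⟨-, hn⟩ | ⟨hN, -⟩) := h
  · obtain rfl := hother C hCA hCB
    exact .inl (hC hD)
  exacts [absurd hAB hn, .inr (.inl hN), absurd hAB.symm hn, .inr (.inr hN)]

theorem ClassPairSeparated.of_forall_mem_adj_iff (hAB : A ≠ B)
    (h : ∀ C ∈ 𝓜, C ≠ A → C ≠ B →
      ((twinGraph G).Adj C A ↔ (twinGraph G).Adj C B)) :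
    ClassPairSeparated G 𝓜 A B := by
  obtain ⟨C, hCA, hCB, -, hC⟩ | h' := classPairSeparated_pair (G := G) hAB
  · exact .inl ⟨C, hCA, hCB, fun hCM => absurd (h C hCM hCA hCB) hC, hC⟩
  · exact .inr h'

end ClassSeparation

section DiameterTwo

theorem dist_eq_two_iff {W : Type*} {H : SimpleGraph W} {u w : W} :
    H.dist u w = 2 ↔ u ≠ w ∧ ¬ H.Adj u w ∧ (H.commonNeighbors u w).Nonempty := by
  rw [← edist_eq_two_iff]
  constructor
  · intro h
    rw [← (Reachable.of_dist_ne_zero (by omega)).coe_dist_eq_edist, h]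
    rfl
  · intro h
    have hr : H.Reachable u w := edist_ne_top_iff_reachable.1 (by simp [h])
    exact_mod_cast hr.coe_dist_eq_edist.trans h

def IsDiamLeTwo (G : SimpleGraph V) : Prop := G.Connected ∧ ∀ u w, G.dist u w ≤ 2

def Separated (G : SimpleGraph V) (M : Set V) : Prop :=
  ∀ a ∈ M, ∀ b ∈ M, a ≠ b → ∃ z ∉ M, ¬ (G.Adj z a ↔ G.Adj z b)

variable {G : SimpleGraph V} {u w z : V} {A B : TwinVertex G} {M : Set V}

theorem IsDiamLeTwo.dist_eq_two (hG : IsDiamLeTwo G) (h : u ≠ w) (hn : ¬ G.Adj u w) :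
    G.dist u w = 2 := by
  have := hG.1.one_lt_dist_of_ne_of_not_adj h hn
  have := hG.2 u w
  omega

theorem IsDiamLeTwo.exists_adj_adj (hG : IsDiamLeTwo G) (h : u ≠ w) (hn : ¬ G.Adj u w) :
    ∃ z, G.Adj u z ∧ G.Adj z w := by
  obtain ⟨-, -, z, hz⟩ := dist_eq_two_iff.1 (hG.dist_eq_two h hn)
  exact ⟨z, hz.1, hz.2.symm⟩

theorem IsDiamLeTwo.dist_ne_dist_iff (hG : IsDiamLeTwo G) (hu : z ≠ u) (hw : z ≠ w) :
    G.dist u z ≠ G.dist w z ↔ ¬ (G.Adj z u ↔ G.Adj z w) := by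
  classical
  have hd : ∀ y, z ≠ y → G.dist y z = if G.Adj z y then 1 else 2 := fun y hy => by
    split_ifs with h
    · exact dist_eq_one_iff_adj.2 h.symm
    · exact hG.dist_eq_two hy.symm fun h' => h h'.symm
  rw [hd u hu, hd w hw]
  split_ifs <;> simp_all

theorem IsDiamLeTwo.resolves_compl_iff (hG : IsDiamLeTwo G) :
    Resolves G Mᶜ ↔ Separated G M := by
  constructor
  · intro h a ha b hb hab
    obtain ⟨z, hz, hd⟩ := h a b hab
    exact ⟨z, hz, (hG.dist_ne_dist_iff (by rintro rfl; exact hz ha)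
      (by rintro rfl; exact hz hb)).1 hd⟩
  · intro h u w huw
    by_cases hu : u ∈ M
    · by_cases hw : w ∈ M
      · obtain ⟨z, hz, hsep⟩ := h u hu w hw huw
        exact ⟨z, hz, (hG.dist_ne_dist_iff (by rintro rfl; exact hz hu)
          (by rintro rfl; exact hz hw)).2 hsep⟩
      · exact ⟨w, hw, by rw [SimpleGraph.dist_self]; exact (hG.1.pos_dist_of_ne huw).ne'⟩
    · exact ⟨u, hu, by rw [SimpleGraph.dist_self]; exact (hG.1.pos_dist_of_ne huw.symm).ne⟩

variable [Fintype V]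

theorem IsDiamLeTwo.metricDim_add_ncard_le (hG : IsDiamLeTwo G) {𝓜 : Set (TwinVertex G)}
    (h : ClassSeparated G 𝓜) : metricDim G + 𝓜.ncard ≤ Fintype.card V := by
  set rep := Function.surjInv (cls_surjective (G := G))
  have hrep : ∀ A, cls G (rep A) = A := Function.surjInv_eq cls_surjective
  set M := rep '' 𝓜
  have hcls : cls G '' M = 𝓜 := by simp [M, Set.image_image, hrep]
  have hM : ∀ m ∈ M, ∀ m' ∈ M, twinRel G m m' → m = m' := by
    rintro _ ⟨A, -, rfl⟩ _ ⟨B, -, rfl⟩ hAB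
    rw [← cls_eq_cls_iff, hrep, hrep] at hAB
    rw [hAB]
  have hsep : Separated G M := by
    rintro _ ⟨A, hA, rfl⟩ _ ⟨B, hB, rfl⟩ hab
    refine exists_adj_ne_adj_of_classPairSeparated hM ⟨A, hA, rfl⟩ ⟨B, hB, rfl⟩ hab ?_
    rw [hcls, hrep, hrep]
    exact h A hA B hB fun h => hab (h ▸ rfl)
  have hdim : metricDim G ≤ Mᶜ.ncard :=
    Nat.sInf_le ⟨Mᶜ, hG.resolves_compl_iff.2 hsep, rfl⟩
  have hcard := Set.ncard_add_ncard_compl M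
  rw [Set.ncard_image_of_injective _ (Function.injective_surjInv _), Nat.card_eq_fintype_card]
    at hcard
  omega

theorem IsDiamLeTwo.exists_classSeparated (hG : IsDiamLeTwo G) :
    ∃ 𝓜 : Set (TwinVertex G), ClassSeparated G 𝓜 ∧
      𝓜.ncard + metricDim G = Fintype.card V := by
  obtain ⟨W, hW, hWcard⟩ :=
    Nat.sInf_mem (s := {k | ∃ W : Set V, Resolves G W ∧ W.ncard = k}) ⟨_, Set.univ,
      fun u w huw => ⟨u, trivial, by
      rw [SimpleGraph.dist_self]; exact (hG.1.pos_dist_of_ne huw.symm).ne⟩, rfl⟩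
  rw [← compl_compl W, hG.resolves_compl_iff] at hW
  have hM : ∀ a ∈ Wᶜ, ∀ b ∈ Wᶜ, twinRel G a b → a = b := by
    intro a ha b hb hab
    by_contra hne
    obtain ⟨z, hz, hsep⟩ := hW a ha b hb hne
    rw [G.adj_comm z a, G.adj_comm z b] at hsep
    exact hsep (hab.adj_iff (fun h => hz (h ▸ ha)) fun h => hz (h ▸ hb))
  refine ⟨cls G '' Wᶜ, ?_, ?_⟩
  · rintro _ ⟨a, ha, rfl⟩ _ ⟨b, hb, rfl⟩ hAB
    have hab : ¬ twinRel G a b := fun h => hAB (cls_eq_cls_iff.2 h)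
    obtain ⟨z, hz, hsep⟩ := hW a ha b hb fun h => hab (h ▸ twinRel.refl G a)
    exact classPairSeparated_image_cls ha hb hab hz hsep
  · rw [Set.InjOn.ncard_image fun a ha b hb h => hM a ha b hb (cls_eq_cls_iff.1 h),
      metricDim, ← hWcard, add_comm, Set.ncard_add_ncard_compl, Nat.card_eq_fintype_card]

theorem ncard_twinVertex_le_card (𝓝 : Set (TwinVertex G)) : 𝓝.ncard ≤ Fintype.card V := by
  have : Finite (TwinVertex G) := Finite.of_surjective _ cls_surjective
  exact (Set.ncard_le_card 𝓝).trans <| (Nat.card_le_card_of_surjective _ cls_surjective).trans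
    Nat.card_eq_fintype_card.le

theorem IsDiamLeTwo.false_of_classPairSeparated_four (hG : IsDiamLeTwo G)
    (hβ : metricDim G = Fintype.card V - 3) {A B C D : TwinVertex G}
    (hAB : A ≠ B) (hAC : A ≠ C) (hAD : A ≠ D) (hBC : B ≠ C) (hBD : B ≠ D) (hCD : C ≠ D)
    (h₁ : ClassPairSeparated G {A, B, C, D} A B) (h₂ : ClassPairSeparated G {A, B, C, D} A C)
    (h₃ : ClassPairSeparated G {A, B, C, D} A D) (h₄ : ClassPairSeparated G {A, B, C, D} B C)
    (h₅ : ClassPairSeparated G {A, B, C, D} B D) (h₆ : ClassPairSeparated G {A, B, C, D} C D) :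
    False := by
  have := hG.metricDim_add_ncard_le (𝓜 := {A, B, C, D}) <| by
    intro P hP Q hQ hPQ
    simp only [Set.mem_insert_iff, Set.mem_singleton_iff] at hP hQ
    rcases hP with hP | hP | hP | hP <;> rcases hQ with hQ | hQ | hQ | hQ <;>
      rw [hP, hQ] at hPQ ⊢ <;>
      first | exact absurd rfl hPQ | assumption | exact .symm (by assumption)
  rw [Set.ncard_insert_of_notMem (by simp [hAB, hAC, hAD]),
    Set.ncard_insert_of_notMem (by simp [hBC, hBD]), Set.ncard_pair hCD] at this
  omega

end DiameterTwo

section Neighborhood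

def IsFar {G : SimpleGraph V} (V₀ P : TwinVertex G) : Prop :=
  P ≠ V₀ ∧ ¬ (twinGraph G).Adj P V₀

variable {G : SimpleGraph V} {v : V} {A B X : TwinVertex G}

theorem IsDiamLeTwo.twinGraph_exists_adj_adj (hG : IsDiamLeTwo G) (hAB : A ≠ B)
    (h : ¬ (twinGraph G).Adj A B) :
    ∃ C, (twinGraph G).Adj A C ∧ (twinGraph G).Adj C B := by
  obtain ⟨a, ha⟩ := A.exists_mem
  obtain ⟨b, hb⟩ := B.exists_mem
  have hab : ¬ G.Adj a b := fun h' => h ((twinGraph_adj_iff ha hb).2 ⟨hAB, h'⟩)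
  obtain ⟨z, haz, hzb⟩ := hG.exists_adj_adj (TwinVertex.ne_of_mem ha hb hAB) hab
  have hz := mem_cls_self G z
  have hAz : A ≠ cls G z := by
    rintro rfl
    exact hab ((adj_iff_adj_of_mem hz ha hb hb hAB).1 hzb)
  have hzB : cls G z ≠ B := by
    rintro rfl
    exact hab ((adj_iff_adj_of_mem ha ha hz hb hAB).1 haz)
  exact ⟨cls G z, (twinGraph_adj_iff ha hz).2 ⟨hAz, haz⟩,
    (twinGraph_adj_iff hz hb).2 ⟨hzB, hzb⟩⟩

theorem IsDiamLeTwo.mem_GammaStar_two_iff (hG : IsDiamLeTwo G) :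
    A ∈ GammaStar G 2 v ↔ IsFar (cls G v) A := by
  change (twinGraph G).dist A (cls G v) = 2 ↔ _
  rw [dist_eq_two_iff]
  refine ⟨fun h => ⟨h.1, h.2.1⟩, fun h => ⟨h.1, h.2, ?_⟩⟩
  obtain ⟨C, hAC, hCv⟩ := hG.twinGraph_exists_adj_adj h.1 h.2
  exact ⟨C, hAC, hCv.symm⟩

theorem IsDiamLeTwo.mem_R1Star_iff (hG : IsDiamLeTwo G) :
    A ∈ R1Star G v ↔ (twinGraph G).Adj A (cls G v) ∧
      ∃ B, IsFar (cls G v) B ∧ (twinGraph G).Adj A B := by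
  rw [R1Star, Set.mem_sep_iff, show A ∈ GammaStar G 1 v ↔ _ from dist_eq_one_iff_adj]
  simp only [hG.mem_GammaStar_two_iff]

/-- Here and below, `hR` says that `R_1^*(V₀) ⊆ {X}`. -/
theorem IsDiamLeTwo.adj_of_isFar (hG : IsDiamLeTwo G) {V₀ : TwinVertex G}
    (hR : ∀ A B, (twinGraph G).Adj A V₀ → IsFar V₀ B → (twinGraph G).Adj A B → A = X)
    (hB : IsFar V₀ B) : (twinGraph G).Adj X B := by
  obtain ⟨C, hBC, hCV⟩ := hG.twinGraph_exists_adj_adj hB.1 hB.2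
  exact hR C B hCV hB hBC.symm ▸ hBC.symm

theorem twinGraph_neighbors_of_homogeneous (h : Homogeneous G (Gamma G 1 v)) :
    ((∀ A B, (twinGraph G).Adj A (cls G v) → (twinGraph G).Adj B (cls G v) → A ≠ B →
        (twinGraph G).Adj A B) ∧ ∀ A, (twinGraph G).Adj A (cls G v) → ¬ typeN G A) ∨
      ∀ A B, (twinGraph G).Adj A (cls G v) → (twinGraph G).Adj B (cls G v) →
        ¬ (twinGraph G).Adj A B := by
  have hmem : ∀ {A a}, a ∈ A.1 → (twinGraph G).Adj A (cls G v) → a ∈ Gamma G 1 v :=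
    fun ha hA => dist_eq_one_iff_adj.2 ((twinGraph_adj_iff ha (mem_cls_self G v)).1 hA).2
  rcases h with h | h
  · refine .inl ⟨fun A B hA hB hAB => ?_, fun A hA hN => ?_⟩
    · obtain ⟨a, ha⟩ := A.exists_mem
      obtain ⟨b, hb⟩ := B.exists_mem
      exact (twinGraph_adj_iff ha hb).2
        ⟨hAB, h a (hmem ha hA) b (hmem hb hB) (TwinVertex.ne_of_mem ha hb hAB)⟩
    · obtain ⟨a, ha, t, ht, hat⟩ := hN.1
      exact hN.2 a ha t ht (h a (hmem ha hA) t (hmem ht hA) hat)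
  · refine .inr fun A B hA hB hAB => ?_
    obtain ⟨a, ha⟩ := A.exists_mem
    obtain ⟨b, hb⟩ := B.exists_mem
    exact h a (hmem ha hA) b (hmem hb hB) ((twinGraph_adj_iff ha hb).1 hAB).2

end Neighborhood

section SecondNeighborClass

variable {G : SimpleGraph V} {V₀ X S B : TwinVertex G}

theorem IsDiamLeTwo.false_of_neighbors_independent (hG : IsDiamLeTwo G)
    (hR : ∀ A C, (twinGraph G).Adj A V₀ → IsFar V₀ C → (twinGraph G).Adj A C → A = X)
    (hSV : (twinGraph G).Adj S V₀) (hSX : S ≠ X) (hB : IsFar V₀ B)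
    (hindep : ∀ A C, (twinGraph G).Adj A V₀ → (twinGraph G).Adj C V₀ →
      ¬ (twinGraph G).Adj A C) : False := by
  have hSB : S ≠ B := fun h => hB.2 (h ▸ hSV)
  obtain ⟨C, hSC, hCB⟩ := hG.twinGraph_exists_adj_adj hSB fun h => hSX (hR S B hSV hB h)
  by_cases hCV : (twinGraph G).Adj C V₀
  · exact hindep S C hSV hCV hSC
  · have hCV' : C ≠ V₀ := by rintro rfl; exact hB.2 hCB.symm
    exact hSX (hR S C hSV ⟨hCV', hCV⟩ hSC)

theorem typeN_of_two_neighbor_classes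
    (hR : ∀ A C, (twinGraph G).Adj A V₀ → IsFar V₀ C → (twinGraph G).Adj A C → A = X)
    (hSV : (twinGraph G).Adj S V₀) (hSX : S ≠ X)
    (hclique : ∀ A C, (twinGraph G).Adj A V₀ → (twinGraph G).Adj C V₀ → A ≠ C →
      (twinGraph G).Adj A C)
    (hnotN : ∀ A, (twinGraph G).Adj A V₀ → ¬ typeN G A) : typeN G V₀ := by
  refine (typeN_or_typeN_of_twinsSeparate hSV.symm <|
    twinsSeparate_of_forall_adj_iff hSV.ne' fun C hCV hCS => ?_).resolve_right (hnotN S hSV)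
  by_cases hC : (twinGraph G).Adj C V₀
  · exact iff_of_true hC (hclique C S hC hSV hCS)
  · exact iff_of_false hC fun h => hSX (hR S C hSV ⟨hCV, hC⟩ h.symm)

theorem eq_of_adj_of_ne_of_two_neighbor_classes
    (hR : ∀ A C, (twinGraph G).Adj A V₀ → IsFar V₀ C → (twinGraph G).Adj A C → A = X)
    (hSV : (twinGraph G).Adj S V₀) (hSX : S ≠ X)
    (hclique : ∀ A C, (twinGraph G).Adj A V₀ → (twinGraph G).Adj C V₀ → A ≠ C →
      (twinGraph G).Adj A C)
    (hnotN : ∀ A, (twinGraph G).Adj A V₀ → ¬ typeN G A) {S' : TwinVertex G}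
    (hS'V : (twinGraph G).Adj S' V₀) (hS'X : S' ≠ X) : S' = S := by
  by_contra hne
  refine (typeN_or_typeN_of_twinsSeparate (hclique S' S hS'V hSV hne) <|
    twinsSeparate_of_forall_adj_iff hne fun C hCS' hCS => ?_).elim
      (hnotN S' hS'V) (hnotN S hSV)
  by_cases hC : C = V₀
  · subst hC; exact iff_of_true hS'V.symm hSV.symm
  by_cases hCV : (twinGraph G).Adj C V₀
  · exact iff_of_true (hclique C S' hCV hS'V hCS') (hclique C S hCV hSV hCS)
  · exact iff_of_false (fun h => hS'X (hR S' C hS'V ⟨hC, hCV⟩ h.symm))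
      fun h => hSX (hR S C hSV ⟨hC, hCV⟩ h.symm)

variable [Fintype V]

theorem IsDiamLeTwo.eq_of_isFar_of_two_neighbor_classes (hG : IsDiamLeTwo G)
    (hβ : metricDim G = Fintype.card V - 3)
    (hR : ∀ A C, (twinGraph G).Adj A V₀ → IsFar V₀ C → (twinGraph G).Adj A C → A = X)
    (hX : ∀ P, IsFar V₀ P → (twinGraph G).Adj X P) (hXV : (twinGraph G).Adj X V₀)
    (hSV : (twinGraph G).Adj S V₀) (hSX : S ≠ X) (hXS : (twinGraph G).Adj X S)
    (hV₀N : typeN G V₀) (hB : IsFar V₀ B) {B' : TwinVertex G} (hB' : IsFar V₀ B') :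
    B' = B := by
  by_contra hne
  have hnSB := fun h => hSX (hR S B hSV hB h)
  have hnSB' := fun h => hSX (hR S B' hSV hB' h)
  have hneSB : S ≠ B := fun h => hB.2 (h ▸ hSV)
  have hneSB' : S ≠ B' := fun h => hB'.2 (h ▸ hSV)
  have hS𝓜 : S ∉ ({V₀, X, B, B'} : Set (TwinVertex G)) := by
    simp [hSV.ne, hSX, hneSB, hneSB']
  refine hG.false_of_classPairSeparated_four hβ (A := V₀) (B := X) (C := B) (D := B')
    hXV.ne' hB.1.symm hB'.1.symm (hX B hB).ne (hX B' hB').ne (Ne.symm hne)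
    (.of_twinsSeparate_left (.inr ⟨hV₀N, hXV.symm⟩))
    (.of_notMem hS𝓜 (by simp) (by simp) hSV hnSB)
    (.of_notMem hS𝓜 (by simp) (by simp) hSV hnSB')
    (.of_notMem hS𝓜 (by simp) (by simp) hXS.symm hnSB)
    (.of_notMem hS𝓜 (by simp) (by simp) hXS.symm hnSB')
    (.of_forall_mem_adj_iff (Ne.symm hne) fun C hC _ _ => ?_)
  simp only [Set.mem_insert_iff, Set.mem_singleton_iff] at hC
  rcases hC with rfl | rfl | rfl | rfl
  · exact iff_of_false (hB.2 ·.symm) (hB'.2 ·.symm)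
  · exact iff_of_true (hX B hB) (hX B' hB')
  all_goals contradiction

theorem IsDiamLeTwo.types_of_two_neighbor_classes (hG : IsDiamLeTwo G)
    (hβ : metricDim G = Fintype.card V - 3) (hXV : (twinGraph G).Adj X V₀)
    (hSV : (twinGraph G).Adj S V₀) (hSX : S ≠ X) (hB : IsFar V₀ B)
    (hXB : (twinGraph G).Adj X B) (hnSB : ¬ (twinGraph G).Adj S B) (hV₀N : typeN G V₀) :
    ¬ typeK G B ∧ (typeK G S → ¬ typeN G B) := by
  have hneSB : S ≠ B := fun h => hB.2 (h ▸ hSV)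
  have four := hG.false_of_classPairSeparated_four hβ (A := V₀) (B := S) (C := X) (D := B)
    hSV.ne' hXV.ne' hB.1.symm hSX hneSB hXB.ne
    (.of_twinsSeparate_left (.inr ⟨hV₀N, hSV.symm⟩))
    (.of_twinsSeparate_left (.inr ⟨hV₀N, hXV.symm⟩))
  refine ⟨fun hK => four (.of_twinsSeparate_right (.inl ⟨hK, hB.2⟩))
      (.symm (.of_nontrivial hK.1 hneSB.symm hXB.symm (hnSB ·.symm)))
      (.of_twinsSeparate_right (.inl ⟨hK, (hnSB ·.symm)⟩))
      (.of_nontrivial hV₀N.1 hB.1.symm hXV.symm (hB.2 ·.symm)),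
    fun hK hN => four (.of_nontrivial hK.1 hneSB hSV hnSB)
      (.symm (.of_nontrivial hN.1 hneSB.symm hXB.symm (hnSB ·.symm)))
      (.of_nontrivial hV₀N.1 hB.1.symm hSV.symm (hB.2 ·.symm))
      (.of_nontrivial hV₀N.1 hB.1.symm hXV.symm (hB.2 ·.symm))⟩

theorem IsDiamLeTwo.structG3_of_two_neighbor_classes (hG : IsDiamLeTwo G)
    (hβ : metricDim G = Fintype.card V - 3)
    (hR : ∀ A C, (twinGraph G).Adj A V₀ → IsFar V₀ C → (twinGraph G).Adj A C → A = X)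
    (hX : ∀ P, IsFar V₀ P → (twinGraph G).Adj X P)
    (hXV : (twinGraph G).Adj X V₀) (hSV : (twinGraph G).Adj S V₀) (hSX : S ≠ X)
    (hB : IsFar V₀ B)
    (hclique : ∀ A C, (twinGraph G).Adj A V₀ → (twinGraph G).Adj C V₀ → A ≠ C →
      (twinGraph G).Adj A C)
    (hnotN : ∀ A, (twinGraph G).Adj A V₀ → ¬ typeN G A) : structG3 G := by
  have hXS := hclique X S hXV hSV hSX.symm
  have hXB := hX B hB
  have hSB := fun h => hSX (hR S B hSV hB h)
  have hV₀N := typeN_of_two_neighbor_classes hR hSV hSX hclique hnotN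
  obtain ⟨hBK, hSKBN⟩ := hG.types_of_two_neighbor_classes hβ hXV hSV hSX hB hXB hSB hV₀N
  refine ⟨X, V₀, S, B, hXV.ne, hXS.ne, hXB.ne, hSV.ne', hB.1.symm,
    fun h => hB.2 (h ▸ hSV), fun Y => ?_, hXV, hXS, hSV.symm, hXB, (hB.2 ·.symm), hSB, hV₀N,
    type1K_iff_not_typeN.2 (hnotN S hSV), type1N_iff_not_typeK.2 hBK,
    fun hK => ⟨hSKBN hK, hnotN X hXV⟩⟩
  by_cases hY : Y = V₀
  · exact .inr (.inl hY)
  by_cases hYV : (twinGraph G).Adj Y V₀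
  · by_cases hYX : Y = X
    · exact .inl hYX
    · exact .inr (.inr (.inl
        (eq_of_adj_of_ne_of_two_neighbor_classes hR hSV hSX hclique hnotN hYV hYX)))
  · exact .inr (.inr (.inr (hG.eq_of_isFar_of_two_neighbor_classes hβ hR hX hXV hSV hSX hXS
      hV₀N hB ⟨hY, hYV⟩)))

end SecondNeighborClass

section FarClasses

variable [Fintype V] {G : SimpleGraph V} {V₀ X B C : TwinVertex G}

theorem IsDiamLeTwo.structG2_of_three_classes (hG : IsDiamLeTwo G)
    (hβ : metricDim G = Fintype.card V - 3) (hXV : (twinGraph G).Adj X V₀)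
    (hX : ∀ P, IsFar V₀ P → (twinGraph G).Adj X P) (hB : IsFar V₀ B)
    (hcover : ∀ Y, Y = V₀ ∨ Y = X ∨ Y = B) : structG2 G := by
  have hXB := hX B hB
  obtain ⟨𝓜, h𝓜, hcard⟩ := hG.exists_classSeparated
  have h3 : ({V₀, X, B} : Set (TwinVertex G)).ncard = 3 := by
    rw [Set.ncard_insert_of_notMem (by simp [hXV.ne', hB.1.symm]), Set.ncard_pair hXB.ne]
  have hn := ncard_twinVertex_le_card ({V₀, X, B} : Set (TwinVertex G))
  have hall : 𝓜 = {V₀, X, B} := Set.eq_of_subset_of_ncard_le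
    (fun Y _ => by rcases hcover Y with rfl | rfl | rfl <;> simp) (by omega)
  subst hall
  -- all classes are chosen, so a class separating two others must have a second member
  have hV₀X := (h𝓜 V₀ (by simp) X (by simp) hXV.ne').nontrivial_or_typeN hXV.symm
    (D := B) (by simp) fun D hDV hDX => by
      rcases hcover D with rfl | rfl | rfl
      exacts [absurd rfl hDV, absurd rfl hDX, rfl]
  have hXB' := (h𝓜 X (by simp) B (by simp) hXB.ne).nontrivial_or_typeN hXB
    (D := V₀) (by simp) fun D hDX hDB => by
      rcases hcover D with rfl | rfl | rfl
      exacts [rfl, absurd rfl hDX, absurd rfl hDB]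
  have hK : typeK G V₀ ∨ typeK G B :=
    typeK_or_typeK_of_twinsSeparate (hB.2 ·.symm) <|
      twinsSeparate_of_forall_adj_iff hB.1.symm fun D hDV hDB => by
        rcases hcover D with rfl | rfl | rfl
        exacts [absurd rfl hDV, iff_of_true hXV hXB, absurd rfl hDB]
  refine ⟨V₀, X, B, hXV.ne', hB.1.symm, hXB.ne, hcover, hXV.symm, hXB, (hB.2 ·.symm), ?_⟩
  simp only [typeKN_iff_nontrivial]
  have := fun h : typeK G V₀ => h.not_typeN
  have := fun h : typeK G B => h.not_typeN
  tauto

theorem IsDiamLeTwo.structG3_of_four_classes_of_typeN (hG : IsDiamLeTwo G)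
    (hβ : metricDim G = Fintype.card V - 3) (hXV : (twinGraph G).Adj X V₀)
    (hX : ∀ P, IsFar V₀ P → (twinGraph G).Adj X P) (hB : IsFar V₀ B) (hC : IsFar V₀ C)
    (hBC : (twinGraph G).Adj B C) (hN : typeN G B)
    (hcover : ∀ Y, Y = V₀ ∨ Y = X ∨ Y = B ∨ Y = C) : structG3 G := by
  have hXB := hX B hB
  have hXC := hX C hC
  have four := hG.false_of_classPairSeparated_four hβ (A := B) (B := X) (C := C) (D := V₀)
    hXB.ne' hBC.ne hB.1 hXC.ne hXV.ne hC.1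
    (.of_twinsSeparate_left (.inr ⟨hN, hXB.symm⟩)) (.of_twinsSeparate_left (.inr ⟨hN, hBC⟩))
  have hCN : ¬ typeN G C := fun hCN => four
    (.of_nontrivial hCN.1 hC.1 hBC.symm hC.2)
    (.of_twinsSeparate_right (.inr ⟨hCN, hXC.symm⟩))
    (.of_nontrivial hN.1 hB.1 hXB.symm hB.2)
    (.of_nontrivial hN.1 hB.1 hBC hB.2)
  have hV₀K : ¬ typeK G V₀ := fun hK => four
    (.of_twinsSeparate_right (.inl ⟨hK, (hB.2 ·.symm)⟩))
    (.of_nontrivial hK.1 hC.1.symm hXV.symm (hC.2 ·.symm))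
    (.of_nontrivial hN.1 hB.1 hXB.symm hB.2)
    (.of_twinsSeparate_right (.inl ⟨hK, (hC.2 ·.symm)⟩))
  have hV₀N : typeK G C → ¬ typeN G V₀ := fun hK hV₀N => four
    (.of_nontrivial hK.1 hC.1 hBC.symm hC.2)
    (.of_nontrivial hV₀N.1 hC.1.symm hXV.symm (hC.2 ·.symm))
    (.of_twinsSeparate_right (.inr ⟨hV₀N, hXV.symm⟩))
    (.of_twinsSeparate_left (.inl ⟨hK, hC.2⟩))
  have hXN : typeK G C → ¬ typeN G X := fun hK hXN => four
    (.of_nontrivial hK.1 hC.1 hBC.symm hC.2)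
    (.of_twinsSeparate_left (.inr ⟨hXN, hXC⟩))
    (.of_twinsSeparate_left (.inr ⟨hXN, hXV⟩))
    (.of_twinsSeparate_left (.inl ⟨hK, hC.2⟩))
  exact ⟨X, B, C, V₀, hXB.ne, hXC.ne, hXV.ne, hBC.ne, hB.1, hC.1, fun Y => by
    have := hcover Y; tauto, hXB, hXC, hBC, hXV, hB.2, hC.2, hN, type1K_iff_not_typeN.2 hCN,
    type1N_iff_not_typeK.2 hV₀K, fun hK => ⟨hV₀N hK, hXN hK⟩⟩

theorem IsDiamLeTwo.false_of_four_classes_of_not_adj (hG : IsDiamLeTwo G)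
    (hβ : metricDim G = Fintype.card V - 3) (hXV : (twinGraph G).Adj X V₀)
    (hX : ∀ P, IsFar V₀ P → (twinGraph G).Adj X P) (hB : IsFar V₀ B) (hC : IsFar V₀ C)
    (hBC : B ≠ C) (hnBC : ¬ (twinGraph G).Adj B C)
    (hcover : ∀ Y, Y = V₀ ∨ Y = X ∨ Y = B ∨ Y = C) : False := by
  have hXB := hX B hB
  have hXC := hX C hC
  have four := hG.false_of_classPairSeparated_four hβ (A := V₀) (B := X) (C := B) (D := C)
    hXV.ne' hB.1.symm hC.1.symm hXB.ne hXC.ne hBC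
  have hsepBC := twinsSeparate_of_forall_adj_iff hBC fun D hDB hDC => by
    rcases hcover D with rfl | rfl | rfl | rfl
    exacts [iff_of_false (hB.2 ·.symm) (hC.2 ·.symm), iff_of_true hXB hXC, absurd rfl hDB,
      absurd rfl hDC]
  by_cases hK : typeK G V₀
  · have hsepV₀X : ClassPairSeparated G {V₀, X, B, C} V₀ X := by
      rcases typeK_or_typeK_of_twinsSeparate hnBC hsepBC with hK' | hK'
      · exact .symm (.of_nontrivial hK'.1 hB.1 hXB.symm hB.2)
      · exact .symm (.of_nontrivial hK'.1 hC.1 hXC.symm hC.2)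
    exact four hsepV₀X (.of_twinsSeparate_left (.inl ⟨hK, (hB.2 ·.symm)⟩))
      (.of_twinsSeparate_left (.inl ⟨hK, (hC.2 ·.symm)⟩))
      (.of_nontrivial hK.1 hB.1.symm hXV.symm (hB.2 ·.symm))
      (.of_nontrivial hK.1 hC.1.symm hXV.symm (hC.2 ·.symm)) (.inr hsepBC)
  · have hBK : typeK G B := (typeK_or_typeK_of_twinsSeparate (hB.2 ·.symm) <|
      twinsSeparate_of_forall_adj_iff hB.1.symm fun D hDV hDB => by
        rcases hcover D with rfl | rfl | rfl | rfl
        exacts [absurd rfl hDV, iff_of_true hXV hXB, absurd rfl hDB,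
          iff_of_false hC.2 (hnBC ·.symm)]).resolve_left hK
    have hCK : typeK G C := (typeK_or_typeK_of_twinsSeparate (hC.2 ·.symm) <|
      twinsSeparate_of_forall_adj_iff hC.1.symm fun D hDV hDC => by
        rcases hcover D with rfl | rfl | rfl | rfl
        exacts [absurd rfl hDV, iff_of_true hXV hXC, iff_of_false hB.2 hnBC,
          absurd rfl hDC]).resolve_left hK
    exact four (.symm (.of_nontrivial hBK.1 hB.1 hXB.symm hB.2))
      (.of_twinsSeparate_right (.inl ⟨hBK, hB.2⟩))
      (.of_twinsSeparate_right (.inl ⟨hCK, hC.2⟩))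
      (.of_nontrivial hCK.1 hBC.symm hXC.symm (hnBC ·.symm))
      (.of_nontrivial hBK.1 hBC hXB.symm hnBC)
      (.of_twinsSeparate_left (.inl ⟨hBK, hnBC⟩))

theorem IsDiamLeTwo.structG3_of_four_classes (hG : IsDiamLeTwo G)
    (hβ : metricDim G = Fintype.card V - 3) (hXV : (twinGraph G).Adj X V₀)
    (hX : ∀ P, IsFar V₀ P → (twinGraph G).Adj X P) (hB : IsFar V₀ B) (hC : IsFar V₀ C)
    (hBC : B ≠ C) (hcover : ∀ Y, Y = V₀ ∨ Y = X ∨ Y = B ∨ Y = C) : structG3 G := by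
  by_cases hadj : (twinGraph G).Adj B C
  · rcases typeN_or_typeN_of_twinsSeparate hadj <|
      twinsSeparate_of_forall_adj_iff hBC fun D hDB hDC => by
        rcases hcover D with rfl | rfl | rfl | rfl
        exacts [iff_of_false (hB.2 ·.symm) (hC.2 ·.symm), iff_of_true (hX B hB) (hX C hC),
          absurd rfl hDB, absurd rfl hDC] with hN | hN
    · exact hG.structG3_of_four_classes_of_typeN hβ hXV hX hB hC hadj hN hcover
    · exact hG.structG3_of_four_classes_of_typeN hβ hXV hX hC hB hadj.symm hN fun Y => by
        have := hcover Y; tauto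
  · exact (hG.false_of_four_classes_of_not_adj hβ hXV hX hB hC hBC hadj hcover).elim

end FarClasses

section ThreeFarClasses

variable {G : SimpleGraph V} {V₀ X B C D P Q R M : TwinVertex G}

def SoleSeparator (G : SimpleGraph V) (C A B : TwinVertex G) : Prop :=
  ¬ ((twinGraph G).Adj C A ↔ (twinGraph G).Adj C B) ∧
    ∀ D, D ≠ A → D ≠ B → D ≠ C → ((twinGraph G).Adj D A ↔ (twinGraph G).Adj D B)

theorem SoleSeparator.symm (h : SoleSeparator G R P Q) : SoleSeparator G R Q P :=
  ⟨fun h' => h.1 h'.symm, fun D hDQ hDP hDR => (h.2 D hDP hDQ hDR).symm⟩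

theorem SoleSeparator.eq (h : SoleSeparator G R P Q) (h' : SoleSeparator G M P Q) (hRP : R ≠ P)
    (hRQ : R ≠ Q) : R = M :=
  by_contra fun hne => h.1 (h'.2 R hRP hRQ hne)

theorem ClassPairSeparated.of_not_soleSeparator {𝓜 : Set (TwinVertex G)} (hPQ : P ≠ Q)
    (hXP : (twinGraph G).Adj X P) (hXQ : (twinGraph G).Adj X Q)
    (h𝓜 : ∀ D ∈ 𝓜, D = X ∨ D = P ∨ D = Q ∨ D = R) (h : ¬ SoleSeparator G R P Q) :
    ClassPairSeparated G 𝓜 P Q := by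
  have hXsep := iff_of_true hXP hXQ
  simp only [SoleSeparator, not_and_or, not_not, not_forall] at h
  obtain h | ⟨D, hDP, hDQ, hDR, hD⟩ := h
  · refine .of_forall_mem_adj_iff hPQ fun D hD hDP hDQ => ?_
    rcases h𝓜 D hD with rfl | rfl | rfl | rfl
    exacts [hXsep, absurd rfl hDP, absurd rfl hDQ, h]
  · refine .inl ⟨D, hDP, hDQ, fun hD𝓜 => ?_, hD⟩
    rcases h𝓜 D hD𝓜 with rfl | rfl | rfl | rfl
    exacts [absurd hXsep hD, absurd rfl hDP, absurd rfl hDQ, absurd rfl hDR]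

variable [Fintype V]

theorem IsDiamLeTwo.false_of_far_triple_separated (hG : IsDiamLeTwo G)
    (hβ : metricDim G = Fintype.card V - 3) (hXV : (twinGraph G).Adj X V₀)
    (hX : ∀ P, IsFar V₀ P → (twinGraph G).Adj X P) (hP : IsFar V₀ P) (hQ : IsFar V₀ Q)
    (hR : IsFar V₀ R) (hPQ : P ≠ Q) (hPR : P ≠ R) (hQR : Q ≠ R)
    (h₁ : ClassPairSeparated G {X, P, Q, R} P Q) (h₂ : ClassPairSeparated G {X, P, Q, R} P R)
    (h₃ : ClassPairSeparated G {X, P, Q, R} Q R) : False := by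
  have hV₀ : V₀ ∉ ({X, P, Q, R} : Set (TwinVertex G)) := by
    simp [hXV.ne', hP.1.symm, hQ.1.symm, hR.1.symm]
  exact hG.false_of_classPairSeparated_four hβ (hX P hP).ne (hX Q hQ).ne (hX R hR).ne
    hPQ hPR hQR
    (.of_notMem hV₀ (by simp) (by simp) hXV.symm (hP.2 ·.symm))
    (.of_notMem hV₀ (by simp) (by simp) hXV.symm (hQ.2 ·.symm))
    (.of_notMem hV₀ (by simp) (by simp) hXV.symm (hR.2 ·.symm)) h₁ h₂ h₃

/-- By `false_of_far_triple_separated` some pair is not separated outside `{X, P, Q, R}`;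
since `X` does not tell far classes apart, only the third class can. -/
theorem IsDiamLeTwo.far_triple_soleSeparator (hG : IsDiamLeTwo G)
    (hβ : metricDim G = Fintype.card V - 3) (hXV : (twinGraph G).Adj X V₀)
    (hX : ∀ P, IsFar V₀ P → (twinGraph G).Adj X P) (hP : IsFar V₀ P) (hQ : IsFar V₀ Q)
    (hR : IsFar V₀ R) (hPQ : P ≠ Q) (hPR : P ≠ R) (hQR : Q ≠ R) :
    SoleSeparator G R P Q ∨ SoleSeparator G Q P R ∨ SoleSeparator G P Q R := by
  by_contra! h
  exact hG.false_of_far_triple_separated hβ hXV hX hP hQ hR hPQ hPR hQR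
    (.of_not_soleSeparator hPQ (hX P hP) (hX Q hQ) (by simp) h.1)
    (.of_not_soleSeparator hPR (hX P hP) (hX R hR) (by simp) h.2.1)
    (.of_not_soleSeparator hQR (hX Q hQ) (hX R hR) (by simp) h.2.2)

theorem IsDiamLeTwo.false_of_far_triple_without_separator (hG : IsDiamLeTwo G)
    (hβ : metricDim G = Fintype.card V - 3) (hXV : (twinGraph G).Adj X V₀)
    (hX : ∀ P, IsFar V₀ P → (twinGraph G).Adj X P) (hP : IsFar V₀ P) (hQ : IsFar V₀ Q)
    (hR : IsFar V₀ R) (hPQ : P ≠ Q) (hPR : P ≠ R) (hQR : Q ≠ R)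
    (hRsep : (twinGraph G).Adj R P ↔ (twinGraph G).Adj R Q)
    (hQsep : (twinGraph G).Adj Q P ↔ (twinGraph G).Adj Q R)
    (hPsep : (twinGraph G).Adj P Q ↔ (twinGraph G).Adj P R) : False := by
  rcases hG.far_triple_soleSeparator hβ hXV hX hP hQ hR hPQ hPR hQR with h | h | h
  exacts [h.1 hRsep, h.1 hQsep, h.1 hPsep]

theorem IsDiamLeTwo.false_of_far_triple_one_edge (hG : IsDiamLeTwo G)
    (hβ : metricDim G = Fintype.card V - 3) (hXV : (twinGraph G).Adj X V₀)
    (hX : ∀ P, IsFar V₀ P → (twinGraph G).Adj X P) (hP : IsFar V₀ P) (hQ : IsFar V₀ Q)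
    (hR : IsFar V₀ R) (hPR : P ≠ R) (hQR : Q ≠ R)
    (hcover : ∀ Y, Y = V₀ ∨ Y = X ∨ Y = P ∨ Y = Q ∨ Y = R) (hPQ : (twinGraph G).Adj P Q)
    (hnPR : ¬ (twinGraph G).Adj P R) (hnQR : ¬ (twinGraph G).Adj Q R) : False := by
  have hXP := hX P hP
  have hXQ := hX Q hQ
  have hXR := hX R hR
  rcases typeK_or_typeK_of_twinsSeparate (hR.2 ·.symm) <|
    twinsSeparate_of_forall_adj_iff hR.1.symm fun D hDV hDR => by
      rcases hcover D with rfl | rfl | rfl | rfl | rfl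
      exacts [absurd rfl hDV, iff_of_true hXV hXR, iff_of_false hP.2 hnPR,
        iff_of_false hQ.2 hnQR, absurd rfl hDR] with hK | hK
  · have hQ𝓜 : Q ∉ ({X, V₀, P, R} : Set (TwinVertex G)) := by
      simp [hXQ.ne', hQ.1, hPQ.ne', hQR]
    exact hG.false_of_classPairSeparated_four hβ hXV.ne (hX P hP).ne hXR.ne hP.1.symm hR.1.symm
      hPR (.of_notMem hQ𝓜 (by simp) (by simp) hXQ.symm hQ.2)
      (.of_nontrivial hK.1 hP.1.symm hXV.symm (hP.2 ·.symm))
      (.of_nontrivial hK.1 hR.1.symm hXV.symm (hR.2 ·.symm))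
      (.of_twinsSeparate_left (.inl ⟨hK, (hP.2 ·.symm)⟩))
      (.of_twinsSeparate_left (.inl ⟨hK, (hR.2 ·.symm)⟩))
      (.of_notMem hQ𝓜 (by simp) (by simp) hPQ.symm hnQR)
  · refine hG.false_of_far_triple_separated hβ hXV hX hP hQ hR hPQ.ne hPR hQR ?_
      (.of_twinsSeparate_right (.inl ⟨hK, (hnPR ·.symm)⟩))
      (.of_twinsSeparate_right (.inl ⟨hK, (hnQR ·.symm)⟩))
    refine .of_forall_mem_adj_iff hPQ.ne fun D hD hDP hDQ => ?_
    simp only [Set.mem_insert_iff, Set.mem_singleton_iff] at hD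
    rcases hD with rfl | rfl | rfl | rfl
    exacts [iff_of_true hXP hXQ, absurd rfl hDP, absurd rfl hDQ,
      iff_of_false (hnPR ·.symm) (hnQR ·.symm)]

theorem IsDiamLeTwo.typeOne_of_far_path (hG : IsDiamLeTwo G)
    (hβ : metricDim G = Fintype.card V - 3) (hXV : (twinGraph G).Adj X V₀)
    (hX : ∀ P, IsFar V₀ P → (twinGraph G).Adj X P) (hP : IsFar V₀ P) (hM : IsFar V₀ M)
    (hQ : IsFar V₀ Q) (hPQ : P ≠ Q) (hPM : (twinGraph G).Adj P M)
    (hMQ : (twinGraph G).Adj M Q) (hnPQ : ¬ (twinGraph G).Adj P Q) (hK : typeK G P) :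
    typeOne G V₀ ∧ typeOne G Q := by
  have hXP := hX P hP
  have hXM := hX M hM
  have hXQ := hX Q hQ
  refine ⟨typeOne_iff_not_nontrivial.2 fun hV₀ => ?_,
    typeOne_iff_not_nontrivial.2 fun hQ' => ?_⟩
  · have hM𝓜 : M ∉ ({V₀, X, P, Q} : Set (TwinVertex G)) := by
      simp [hM.1, hXM.ne', hPM.ne', hMQ.ne]
    exact hG.false_of_classPairSeparated_four hβ hXV.ne' hP.1.symm hQ.1.symm hXP.ne hXQ.ne hPQ
      (.symm (.of_notMem hM𝓜 (by simp) (by simp) hXM.symm hM.2))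
      (.symm (.of_notMem hM𝓜 (by simp) (by simp) hPM.symm hM.2))
      (.symm (.of_notMem hM𝓜 (by simp) (by simp) hMQ hM.2))
      (.of_nontrivial hV₀ hP.1.symm hXV.symm (hP.2 ·.symm))
      (.of_nontrivial hV₀ hQ.1.symm hXV.symm (hQ.2 ·.symm))
      (.of_twinsSeparate_left (.inl ⟨hK, hnPQ⟩))
  · have hV₀𝓜 : V₀ ∉ ({X, M, P, Q} : Set (TwinVertex G)) := by
      simp [hXV.ne', hM.1.symm, hP.1.symm, hQ.1.symm]
    exact hG.false_of_classPairSeparated_four hβ hXM.ne hXP.ne hXQ.ne hPM.ne' hMQ.ne hPQ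
      (.of_notMem hV₀𝓜 (by simp) (by simp) hXV.symm (hM.2 ·.symm))
      (.of_notMem hV₀𝓜 (by simp) (by simp) hXV.symm (hP.2 ·.symm))
      (.of_notMem hV₀𝓜 (by simp) (by simp) hXV.symm (hQ.2 ·.symm))
      (.of_nontrivial hQ' hPQ.symm hMQ.symm (hnPQ ·.symm))
      (.of_nontrivial hK.1 hPQ hPM hnPQ)
      (.of_twinsSeparate_left (.inl ⟨hK, hnPQ⟩))

theorem IsDiamLeTwo.not_typeN_of_far_path (hG : IsDiamLeTwo G)
    (hβ : metricDim G = Fintype.card V - 3) (hXV : (twinGraph G).Adj X V₀)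
    (hX : ∀ P, IsFar V₀ P → (twinGraph G).Adj X P) (hP : IsFar V₀ P) (hM : IsFar V₀ M)
    (hQ : IsFar V₀ Q) (hPQ : P ≠ Q) (hPM : (twinGraph G).Adj P M)
    (hMQ : (twinGraph G).Adj M Q) (hnPQ : ¬ (twinGraph G).Adj P Q) (hK : typeK G P) :
    ¬ typeN G X ∧ ¬ typeN G M := by
  have hXQ := hX Q hQ
  have hQ𝓜 : Q ∉ ({V₀, X, M, P} : Set (TwinVertex G)) := by
    simp [hQ.1, hXQ.ne', hMQ.ne', hPQ.symm]
  have four := hG.false_of_classPairSeparated_four hβ (A := V₀) (B := X) (C := M) (D := P)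
    hXV.ne' hM.1.symm hP.1.symm (hX M hM).ne (hX P hP).ne hPM.ne'
    (.symm (.of_notMem hQ𝓜 (by simp) (by simp) hXQ.symm hQ.2))
    (.symm (.of_notMem hQ𝓜 (by simp) (by simp) hMQ.symm hQ.2))
    (.of_twinsSeparate_right (.inl ⟨hK, hP.2⟩))
  exact ⟨fun hN => four (.of_twinsSeparate_left (.inr ⟨hN, hX M hM⟩))
      (.of_twinsSeparate_left (.inr ⟨hN, hX P hP⟩))
      (.of_notMem hQ𝓜 (by simp) (by simp) hMQ.symm (hnPQ ·.symm)),
    fun hN => four (.of_twinsSeparate_right (.inr ⟨hN, (hX M hM).symm⟩))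
      (.of_notMem hQ𝓜 (by simp) (by simp) hXQ.symm (hnPQ ·.symm))
      (.of_notMem hQ𝓜 (by simp) (by simp) hMQ.symm (hnPQ ·.symm))⟩

theorem IsDiamLeTwo.structG7_of_far_path_of_typeK (hG : IsDiamLeTwo G)
    (hβ : metricDim G = Fintype.card V - 3) (hXV : (twinGraph G).Adj X V₀)
    (hX : ∀ P, IsFar V₀ P → (twinGraph G).Adj X P) (hP : IsFar V₀ P) (hM : IsFar V₀ M)
    (hQ : IsFar V₀ Q) (hPQ : P ≠ Q)
    (hcover : ∀ Y, Y = V₀ ∨ Y = X ∨ Y = P ∨ Y = M ∨ Y = Q) (hPM : (twinGraph G).Adj P M)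
    (hMQ : (twinGraph G).Adj M Q) (hnPQ : ¬ (twinGraph G).Adj P Q) (hK : typeK G P) :
    structG7 G := by
  obtain ⟨hV₀, hQ1⟩ := hG.typeOne_of_far_path hβ hXV hX hP hM hQ hPQ hPM hMQ hnPQ hK
  obtain ⟨hXN, hMN⟩ := hG.not_typeN_of_far_path hβ hXV hX hP hM hQ hPQ hPM hMQ hnPQ hK
  have hXM := hX M hM
  exact ⟨X, M, P, Q, V₀, hXM.ne, (hX P hP).ne, (hX Q hQ).ne, hXV.ne, hPM.ne', hMQ.ne, hM.1,
    hPQ, hP.1, hQ.1, fun Y => by have := hcover Y; tauto, hXM, hX P hP, hX Q hQ, hPM.symm,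
    hMQ, hXV, hnPQ, hM.2, hP.2, hQ.2, hV₀, type1K_iff_not_typeN.2 hXN,
    type1K_iff_not_typeN.2 hMN, hK, hQ1⟩

theorem IsDiamLeTwo.structG7_of_far_path (hG : IsDiamLeTwo G)
    (hβ : metricDim G = Fintype.card V - 3) (hXV : (twinGraph G).Adj X V₀)
    (hX : ∀ P, IsFar V₀ P → (twinGraph G).Adj X P) (hP : IsFar V₀ P) (hM : IsFar V₀ M)
    (hQ : IsFar V₀ Q) (hPQ : P ≠ Q)
    (hcover : ∀ Y, Y = V₀ ∨ Y = X ∨ Y = P ∨ Y = M ∨ Y = Q) (hPM : (twinGraph G).Adj P M)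
    (hMQ : (twinGraph G).Adj M Q) (hnPQ : ¬ (twinGraph G).Adj P Q) : structG7 G := by
  rcases typeK_or_typeK_of_twinsSeparate hnPQ <|
    twinsSeparate_of_forall_adj_iff hPQ fun D hDP hDQ => by
      rcases hcover D with rfl | rfl | rfl | rfl | rfl
      exacts [iff_of_false (hP.2 ·.symm) (hQ.2 ·.symm), iff_of_true (hX P hP) (hX Q hQ),
        absurd rfl hDP, iff_of_true hPM.symm hMQ, absurd rfl hDQ] with hK | hK
  · exact hG.structG7_of_far_path_of_typeK hβ hXV hX hP hM hQ hPQ hcover hPM hMQ hnPQ hK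
  · exact hG.structG7_of_far_path_of_typeK hβ hXV hX hQ hM hP hPQ.symm
      (fun Y => by have := hcover Y; tauto) hMQ.symm hPM.symm (hnPQ ·.symm) hK

theorem IsDiamLeTwo.structG7_of_five_classes (hG : IsDiamLeTwo G)
    (hβ : metricDim G = Fintype.card V - 3) (hXV : (twinGraph G).Adj X V₀)
    (hX : ∀ P, IsFar V₀ P → (twinGraph G).Adj X P) (hB : IsFar V₀ B) (hC : IsFar V₀ C)
    (hD : IsFar V₀ D) (hBC : B ≠ C) (hBD : B ≠ D) (hCD : C ≠ D)
    (hcover : ∀ Y, Y = V₀ ∨ Y = X ∨ Y = B ∨ Y = C ∨ Y = D) : structG7 G := by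
  have hcover' : ∀ {P Q R}, (∀ Y, Y = B ∨ Y = C ∨ Y = D → Y = P ∨ Y = Q ∨ Y = R) →
      ∀ Y, Y = V₀ ∨ Y = X ∨ Y = P ∨ Y = Q ∨ Y = R := fun h Y =>
    (hcover Y).imp_right (.imp_right (h Y))
  by_cases hBC' : (twinGraph G).Adj B C <;> by_cases hBD' : (twinGraph G).Adj B D <;>
    by_cases hCD' : (twinGraph G).Adj C D
  · exact (hG.false_of_far_triple_without_separator hβ hXV hX hB hC hD hBC hBD hCD
      (iff_of_true hBD'.symm hCD'.symm) (iff_of_true hBC'.symm hCD')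
      (iff_of_true hBC' hBD')).elim
  · exact hG.structG7_of_far_path hβ hXV hX hC hB hD hCD (hcover' (by tauto)) hBC'.symm hBD'
      hCD'
  · exact hG.structG7_of_far_path hβ hXV hX hB hC hD hBD (hcover' (by tauto)) hBC' hCD' hBD'
  · exact (hG.false_of_far_triple_one_edge hβ hXV hX hB hC hD hBD hCD hcover hBC' hBD'
      hCD').elim
  · exact hG.structG7_of_far_path hβ hXV hX hB hD hC hBC (hcover' (by tauto)) hBD' hCD'.symm
      hBC'
  · exact (hG.false_of_far_triple_one_edge hβ hXV hX hB hD hC hBC hCD.symm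
      (hcover' (by tauto)) hBD' hBC' (hCD' ·.symm)).elim
  · exact (hG.false_of_far_triple_one_edge hβ hXV hX hC hD hB hBC.symm hBD.symm
      (hcover' (by tauto)) hCD' (hBC' ·.symm) (hBD' ·.symm)).elim
  · exact (hG.false_of_far_triple_without_separator hβ hXV hX hB hC hD hBC hBD hCD
      (iff_of_false (hBD' ·.symm) (hCD' ·.symm)) (iff_of_false (hBC' ·.symm) hCD')
      (iff_of_false hBC' hBD')).elim

end ThreeFarClasses

section ManyFarClasses

variable [Fintype V] {G : SimpleGraph V} {V₀ X P Q R S : TwinVertex G}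

theorem IsDiamLeTwo.false_of_four_far_path (hG : IsDiamLeTwo G)
    (hβ : metricDim G = Fintype.card V - 3) (hXV : (twinGraph G).Adj X V₀)
    (hX : ∀ P, IsFar V₀ P → (twinGraph G).Adj X P) (hP : IsFar V₀ P) (hQ : IsFar V₀ Q)
    (hR : IsFar V₀ R) (hS : IsFar V₀ S) (hPR : P ≠ R) (hQS : Q ≠ S)
    (hPQ : (twinGraph G).Adj P Q) (hQR : (twinGraph G).Adj Q R) (hRS : (twinGraph G).Adj R S)
    (hnPR : ¬ (twinGraph G).Adj P R) (hnQS : ¬ (twinGraph G).Adj Q S) : False := by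
  have hP𝓜 : P ∉ ({V₀, X, Q, R} : Set (TwinVertex G)) := by
    simp [hP.1, (hX P hP).ne', hPQ.ne, hPR]
  have hS𝓜 : S ∉ ({V₀, X, Q, R} : Set (TwinVertex G)) := by
    simp [hS.1, (hX S hS).ne', hQS.symm, hRS.ne']
  exact hG.false_of_classPairSeparated_four hβ hXV.ne' hQ.1.symm hR.1.symm (hX Q hQ).ne
    (hX R hR).ne hQR.ne
    (.symm (.of_notMem hP𝓜 (by simp) (by simp) (hX P hP).symm hP.2))
    (.symm (.of_notMem hP𝓜 (by simp) (by simp) hPQ hP.2))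
    (.symm (.of_notMem hS𝓜 (by simp) (by simp) hRS.symm hS.2))
    (.of_notMem hS𝓜 (by simp) (by simp) (hX S hS).symm (hnQS ·.symm))
    (.of_notMem hP𝓜 (by simp) (by simp) (hX P hP).symm hnPR)
    (.of_notMem hP𝓜 (by simp) (by simp) hPQ hnPR)

theorem IsDiamLeTwo.false_of_soleSeparator_soleSeparator (hG : IsDiamLeTwo G)
    (hβ : metricDim G = Fintype.card V - 3) (hXV : (twinGraph G).Adj X V₀)
    (hX : ∀ P, IsFar V₀ P → (twinGraph G).Adj X P) (hP : IsFar V₀ P) (hQ : IsFar V₀ Q)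
    (hR : IsFar V₀ R) (hS : IsFar V₀ S) (hPQ : P ≠ Q) (hPR : P ≠ R) (hPS : P ≠ S)
    (hQR : Q ≠ R) (hQS : Q ≠ S) (hRS : R ≠ S) (h₁ : SoleSeparator G R P Q)
    (h₂ : SoleSeparator G Q P S) : False := by
  have hR₁ := h₁.1
  have hS₁ := h₁.2 S hPS.symm hQS.symm hRS.symm
  have hQ₂ := h₂.1
  have hR₂ := h₂.2 R hPR.symm hRS hQR.symm
  rcases hG.far_triple_soleSeparator hβ hXV hX hP hR hS hPR hPS hRS with h₃ | h₃ | h₃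
  · have hS₃ := h₃.1
    have hQ₃ := h₃.2 Q hPQ.symm hQR hQS
    grind [SimpleGraph.adj_comm]
  · exact hQR (h₂.eq h₃ hPQ.symm hQS)
  · have hP₃ := h₃.1
    have hQ₃ := h₃.2 Q hQR hQS hPQ.symm
    rcases hG.far_triple_soleSeparator hβ hXV hX hQ hR hS hQR hQS hRS with h₄ | h₄ | h₄
    · have hS₄ := h₄.1
      have hP₄ := h₄.2 P hPQ hPR hPS
      -- the sole-separator conditions now force `Q P R S` or `P S Q R` to be an induced path
      by_cases hPQ' : (twinGraph G).Adj P Q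
      · exact hG.false_of_four_far_path hβ hXV hX hQ hP hR hS hQR hPS hPQ'.symm
          (by grind [SimpleGraph.adj_comm]) (by grind [SimpleGraph.adj_comm])
          (by grind [SimpleGraph.adj_comm]) (by grind [SimpleGraph.adj_comm])
      · exact hG.false_of_four_far_path hβ hXV hX hP hS hQ hR hPQ hRS.symm
          (by grind [SimpleGraph.adj_comm]) (by grind [SimpleGraph.adj_comm])
          (by grind [SimpleGraph.adj_comm]) hPQ' (by grind [SimpleGraph.adj_comm])
    · have hP₄ := h₄.2 P hPQ hPS hPR
      grind [SimpleGraph.adj_comm]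
    · exact hPQ (h₃.eq h₄ hPR hPS)

theorem IsDiamLeTwo.false_of_soleSeparator (hG : IsDiamLeTwo G)
    (hβ : metricDim G = Fintype.card V - 3) (hXV : (twinGraph G).Adj X V₀)
    (hX : ∀ P, IsFar V₀ P → (twinGraph G).Adj X P) (hP : IsFar V₀ P) (hQ : IsFar V₀ Q)
    (hR : IsFar V₀ R) (hS : IsFar V₀ S) (hPQ : P ≠ Q) (hPR : P ≠ R) (hPS : P ≠ S)
    (hQR : Q ≠ R) (hQS : Q ≠ S) (hRS : R ≠ S) (h : SoleSeparator G R P Q) : False := by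
  rcases hG.far_triple_soleSeparator hβ hXV hX hP hQ hS hPQ hPS hQS with h' | h' | h'
  · exact hRS (h.eq h' hPR.symm hQR.symm)
  · exact hG.false_of_soleSeparator_soleSeparator hβ hXV hX hP hQ hR hS hPQ hPR hPS hQR hQS hRS
      h h'
  · exact hG.false_of_soleSeparator_soleSeparator hβ hXV hX hQ hP hR hS hPQ.symm hQR hQS hPR
      hPS hRS h.symm h'

theorem IsDiamLeTwo.false_of_four_far_classes (hG : IsDiamLeTwo G)
    (hβ : metricDim G = Fintype.card V - 3) (hXV : (twinGraph G).Adj X V₀)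
    (hX : ∀ P, IsFar V₀ P → (twinGraph G).Adj X P) (hP : IsFar V₀ P) (hQ : IsFar V₀ Q)
    (hR : IsFar V₀ R) (hS : IsFar V₀ S) (hPQ : P ≠ Q) (hPR : P ≠ R) (hPS : P ≠ S)
    (hQR : Q ≠ R) (hQS : Q ≠ S) (hRS : R ≠ S) : False := by
  rcases hG.far_triple_soleSeparator hβ hXV hX hP hQ hR hPQ hPR hQR with h | h | h
  · exact hG.false_of_soleSeparator hβ hXV hX hP hQ hR hS hPQ hPR hPS hQR hQS hRS h
  · exact hG.false_of_soleSeparator hβ hXV hX hP hR hQ hS hPR hPQ hPS hQR.symm hRS hQS h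
  · exact hG.false_of_soleSeparator hβ hXV hX hQ hR hP hS hQR hPQ.symm hQS hPR.symm hRS hPS h

end ManyFarClasses

section Assembly

variable [Fintype V] {G : SimpleGraph V} {V₀ X B : TwinVertex G}

theorem IsDiamLeTwo.structures_of_unique_neighbor_class (hG : IsDiamLeTwo G)
    (hβ : metricDim G = Fintype.card V - 3) (hXV : (twinGraph G).Adj X V₀)
    (hX : ∀ P, IsFar V₀ P → (twinGraph G).Adj X P) (hB : IsFar V₀ B)
    (hcover : ∀ Y, Y = V₀ ∨ Y = X ∨ IsFar V₀ Y) :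
    structG2 G ∨ structG3 G ∨ structG7 G := by
  by_cases h1 : ∀ P, IsFar V₀ P → P = B
  · exact .inl (hG.structG2_of_three_classes hβ hXV hX hB fun Y => by
      have := hcover Y; have := h1 Y; tauto)
  push Not at h1
  obtain ⟨C, hC, hCB⟩ := h1
  by_cases h2 : ∀ P, IsFar V₀ P → P = B ∨ P = C
  · exact .inr (.inl (hG.structG3_of_four_classes hβ hXV hX hB hC (Ne.symm hCB) fun Y => by
      have := hcover Y; have := h2 Y; tauto))
  push Not at h2
  obtain ⟨D, hD, hDB, hDC⟩ := h2
  by_cases h3 : ∀ P, IsFar V₀ P → P = B ∨ P = C ∨ P = D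
  · exact .inr (.inr (hG.structG7_of_five_classes hβ hXV hX hB hC hD (Ne.symm hCB)
      (Ne.symm hDB) (Ne.symm hDC) fun Y => by have := hcover Y; have := h3 Y; tauto))
  push Not at h3
  obtain ⟨E, hE, hEB, hEC, hED⟩ := h3
  exact (hG.false_of_four_far_classes hβ hXV hX hB hC hD hE (Ne.symm hCB) (Ne.symm hDB)
    (Ne.symm hEB) (Ne.symm hDC) (Ne.symm hEC) (Ne.symm hED)).elim

end Assembly

/-- If `G` is connected of order `n`, `diam(G) = 2`, `β(G) = n - 3`, `v` is a
vertex with `Γ_2^*(v^*) ≠ ∅` and `Γ_1(v)` homogeneous, and `|R_1^*(v^*)| = 1`,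
then the twin graph satisfies one of the structures `G_2`, `G_3`, `G_7`. -/
theorem structures_of_R1Star_card_one
    {V : Type*} [Fintype V] (G : SimpleGraph V)
    (hdiam : diamEq G 2)
    (hbeta : metricDim G = Fintype.card V - 3)
    (v : V) (h2 : (GammaStar G 2 v).Nonempty)
    (hhom : Homogeneous G (Gamma G 1 v))
    (hR1 : (R1Star G v).ncard = 1) :
    structG2 G ∨ structG3 G ∨ structG7 G := by
  have hG : IsDiamLeTwo G := ⟨hdiam.1, hdiam.2.1⟩
  obtain ⟨X, hX1⟩ := Set.ncard_eq_one.1 hR1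
  have hR : ∀ A B, (twinGraph G).Adj A (cls G v) → IsFar (cls G v) B →
      (twinGraph G).Adj A B → A = X := fun A B hA hB hAB => by
    simpa [hX1] using hG.mem_R1Star_iff.2 ⟨hA, B, hB, hAB⟩
  have hXV := (hG.mem_R1Star_iff.1 (hX1 ▸ rfl : X ∈ R1Star G v)).1
  have hX := fun P => hG.adj_of_isFar (B := P) hR
  obtain ⟨B, hB⟩ := h2
  rw [hG.mem_GammaStar_two_iff] at hB
  by_cases hS : ∃ S, (twinGraph G).Adj S (cls G v) ∧ S ≠ X
  · obtain ⟨S, hSV, hSX⟩ := hS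
    rcases twinGraph_neighbors_of_homogeneous hhom with ⟨hclique, hnotN⟩ | hindep
    · exact .inr (.inl (hG.structG3_of_two_neighbor_classes hbeta hR hX hXV hSV hSX hB
        hclique hnotN))
    · exact (hG.false_of_neighbors_independent hR hSV hSX hB hindep).elim
  push Not at hS
  refine hG.structures_of_unique_neighbor_class hbeta hXV hX hB fun Y => ?_
  by_cases hY : Y = cls G v
  · exact .inl hY
  by_cases hYV : (twinGraph G).Adj Y (cls G v)
  exacts [.inr (.inl (hS Y hYV)), .inr (.inr ⟨hY, hYV⟩)]

end PaperMetricDim
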